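/- arXiv:1703.05553 — 5 statements merged into one kernel-verified Lean document; each statement's English description precedes it below -/
import Mathlib

section
/- Let G be a group and let H be a subgroup of G of finite index. If H admits a faithful representation into GL(d,F), for some positive integer d and field F, whose image is NIU-linear, then G admits a faithful representation into GL(d',F) for some positive integer d' whose image is NIU-linear. The same statement holds with NIU-linear replaced by VUF-linear in both hypothesis and conclusion. -/
open Matrix

/-- `M ∈ GL(d,F)` is unipotent if `(M - I)^d = 0`. -/
def IsUnipotent {d : ℕ} {F : Type} [Field F] (M : GL (Fin d) F) : Prop :=
  ((M : Matrix (Fin d) (Fin d) F) - 1) ^ d = 0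

/-- A subgroup of `GL(d,F)` is NIU-linear if every unipotent element of it has finite order. -/
def IsNIU {d : ℕ} {F : Type} [Field F] (G : Subgroup (GL (Fin d) F)) : Prop :=
  ∀ g ∈ G, IsUnipotent g → IsOfFinOrder g

/-- A subgroup of `GL(d,F)` is VUF-linear if it has a finite index subgroup whose only
unipotent element is the identity. -/
def IsVUF {d : ℕ} {F : Type} [Field F] (G : Subgroup (GL (Fin d) F)) : Prop :=
  ∃ H : Subgroup (GL (Fin d) F), H ≤ G ∧ H.relIndex G ≠ 0 ∧
    ∀ h ∈ H, IsUnipotent h → h = 1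


namespace InducedRepAux

lemma conj_pow_grp {G : Type} [Group G] (y a : G) (m : ℕ) :
    (y * a * y⁻¹) ^ m = y * a ^ m * y⁻¹ := by
  induction m with
  | zero => simp
  | succ n ih => rw [pow_succ, pow_succ, ih]; group

lemma matrix_pow_card_eq_zero {n : Type} [Fintype n] [DecidableEq n] {F : Type} [Field F]
    {M : Matrix n n F} {D : ℕ} (h : M ^ D = 0) : M ^ (Fintype.card n) = 0 := by
  have hn : IsNilpotent M := ⟨D, h⟩
  have h1 : M.charpoly = Polynomial.X ^ Fintype.card n := by
    rw [← sub_eq_zero]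
    exact (Matrix.isNilpotent_charpoly_sub_pow_of_isNilpotent hn).eq_zero
  have h2 := M.aeval_self_charpoly
  rw [h1] at h2
  simpa using h2

lemma sub_one_pow_of_pow {R : Type} [Ring R] {M : R} {D : ℕ} (h : (M - 1) ^ D = 0) (k : ℕ) :
    (M ^ k - 1) ^ D = 0 := by
  have hc : Commute (∑ i ∈ Finset.range k, M ^ i) (M - 1) :=
    Commute.sub_right
      (Commute.sum_left _ _ _ fun i _ => (Commute.refl M).pow_left i)
      (Commute.sum_left _ _ _ fun i _ => Commute.one_right _)
  rw [← geom_sum_mul, hc.mul_pow, h, mul_zero]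

variable {G : Type} [Group G] (H : Subgroup G) {d : ℕ} {F : Type} [Field F]
variable [Fintype (G ⧸ H)] [DecidableEq (G ⧸ H)]

lemma mk_mul_out (g : G) (y : G ⧸ H) :
    (QuotientGroup.mk (g * Quotient.out y) : G ⧸ H) = g • y := by
  have := MulAction.Quotient.mk_smul_out (G := G) H g y
  simpa [smul_eq_mul] using this

lemma mem_of_eq_smul (g : G) (x y : G ⧸ H) (h : x = g • y) :
    (Quotient.out x)⁻¹ * (g * Quotient.out y) ∈ H := by
  rw [← QuotientGroup.eq, QuotientGroup.out_eq', mk_mul_out]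
  exact h

/-- The `H`-element attached to a pair of cosets related by `g`. -/
noncomputable def uElt (g : G) (x y : G ⧸ H) (h : x = g • y) : ↥H :=
  ⟨(Quotient.out x)⁻¹ * (g * Quotient.out y), mem_of_eq_smul H g x y h⟩

lemma uElt_mul (g g' : G) (x y z : G ⧸ H) (h : x = g • y) (h' : y = g' • z) :
    uElt H g x y h * uElt H g' y z h' =
      uElt H (g * g') x z (by rw [h, h', smul_smul]) := by
  apply Subtype.ext
  show ((Quotient.out x)⁻¹ * (g * Quotient.out y)) *
      ((Quotient.out y)⁻¹ * (g' * Quotient.out z)) =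
    (Quotient.out x)⁻¹ * ((g * g') * Quotient.out z)
  group

variable (ρ : ↥H →* GL (Fin d) F)

/-- The induced-representation matrix of `g`. -/
noncomputable def A (g : G) : Matrix (Fin d × (G ⧸ H)) (Fin d × (G ⧸ H)) F :=
  fun p q =>
    if h : p.2 = g • q.2 then
      (ρ (uElt H g p.2 q.2 h) : Matrix (Fin d) (Fin d) F) p.1 q.1
    else 0

lemma A_one : A H ρ 1 = 1 := by
  ext ⟨i, x⟩ ⟨j, y⟩
  show (if h : x = (1 : G) • y then
      (ρ (uElt H 1 x y h) : Matrix (Fin d) (Fin d) F) i j else 0) = _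
  by_cases h : x = y
  · subst h
    have h1 : x = (1 : G) • x := (one_smul _ _).symm
    rw [dif_pos h1]
    have hu : uElt H 1 x x h1 = 1 := by
      apply Subtype.ext
      show (Quotient.out x)⁻¹ * ((1 : G) * Quotient.out x) = 1
      group
    rw [hu, _root_.map_one]
    show (1 : Matrix (Fin d) (Fin d) F) i j = (1 : Matrix (Fin d × (G ⧸ H)) _ F) (i, x) (j, x)
    simp [Matrix.one_apply, Prod.ext_iff]
  · rw [dif_neg (by simpa using h)]
    have : ((i, x) : Fin d × (G ⧸ H)) ≠ (j, y) := by
      simp [Prod.ext_iff]; intro _; exact h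
    rw [Matrix.one_apply_ne this]

lemma A_mul (g g' : G) : A H ρ (g * g') = A H ρ g * A H ρ g' := by
  ext p q
  rw [Matrix.mul_apply, Fintype.sum_prod_type]
  have hstep : ∀ j : Fin d,
      ∑ y : G ⧸ H, A H ρ g p (j, y) * A H ρ g' (j, y) q
        = A H ρ g p (j, g' • q.2) * A H ρ g' (j, g' • q.2) q := by
    intro j
    apply Fintype.sum_eq_single
    intro y hy
    have hne : ¬ (y = g' • q.2) := hy
    have : A H ρ g' (j, y) q = 0 := by
      show (if h : y = g' • q.2 then _ else (0 : F)) = 0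
      rw [dif_neg hne]
    rw [this, mul_zero]
  rw [Finset.sum_congr rfl fun j _ => hstep j]
  by_cases h : p.2 = (g * g') • q.2
  · have h2 : p.2 = g • (g' • q.2) := by rw [h, mul_smul]
    show (if hh : p.2 = (g * g') • q.2 then
        (ρ (uElt H (g * g') p.2 q.2 hh) : Matrix (Fin d) (Fin d) F) p.1 q.1 else 0) = _
    rw [dif_pos h]
    have hterm : ∀ j : Fin d,
        A H ρ g p (j, g' • q.2) * A H ρ g' (j, g' • q.2) q
          = (ρ (uElt H g p.2 (g' • q.2) h2) : Matrix (Fin d) (Fin d) F) p.1 j *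
            (ρ (uElt H g' (g' • q.2) q.2 rfl) : Matrix (Fin d) (Fin d) F) j q.1 := by
      intro j
      show (if hh : p.2 = g • (g' • q.2) then _ else (0:F)) *
          (if hh : (g' • q.2) = g' • q.2 then _ else (0:F)) = _
      rw [dif_pos h2, dif_pos rfl]
    rw [Finset.sum_congr rfl fun j _ => hterm j, ← Matrix.mul_apply]
    have : (ρ (uElt H g p.2 (g' • q.2) h2) : Matrix (Fin d) (Fin d) F) *
        (ρ (uElt H g' (g' • q.2) q.2 rfl) : Matrix (Fin d) (Fin d) F)
        = (ρ (uElt H (g * g') p.2 q.2 h) : Matrix (Fin d) (Fin d) F) := by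
      rw [← Units.val_mul, ← _root_.map_mul, uElt_mul]
    rw [this]
  · show (if hh : p.2 = (g * g') • q.2 then
        (ρ (uElt H (g * g') p.2 q.2 hh) : Matrix (Fin d) (Fin d) F) p.1 q.1 else 0) = _
    rw [dif_neg h]
    have h2 : ¬ (p.2 = g • (g' • q.2)) := by rw [← mul_smul]; exact h
    have : ∀ j : Fin d, A H ρ g p (j, g' • q.2) * A H ρ g' (j, g' • q.2) q = 0 := by
      intro j
      have : A H ρ g p (j, g' • q.2) = 0 := by
        show (if hh : p.2 = g • (g' • q.2) then _ else (0:F)) = 0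
        rw [dif_neg h2]
      rw [this, zero_mul]
    rw [Finset.sum_congr rfl fun j _ => this j, Finset.sum_const_zero]

/-- The induced representation as a monoid hom to matrices. -/
noncomputable def Ahom : G →* Matrix (Fin d × (G ⧸ H)) (Fin d × (G ⧸ H)) F where
  toFun := A H ρ
  map_one' := A_one H ρ
  map_mul' := A_mul H ρ

/-- The induced representation into units of the matrix ring. -/
noncomputable def rep : G →* (Matrix (Fin d × (G ⧸ H)) (Fin d × (G ⧸ H)) F)ˣ :=
  (Ahom H ρ).toHomUnits

lemma rep_coe (g : G) : ((rep H ρ g : (Matrix (Fin d × (G ⧸ H)) _ F)ˣ) :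
    Matrix (Fin d × (G ⧸ H)) (Fin d × (G ⧸ H)) F) = A H ρ g :=
  rfl

lemma rep_injective (hd : 0 < d) (hρ : Function.Injective ρ) :
    Function.Injective (rep H ρ) := by
  rw [injective_iff_map_eq_one]
  intro g hg
  have hA : A H ρ g = 1 := by
    rw [← rep_coe H ρ g, hg, Units.val_one]
  set i0 : Fin d := ⟨0, hd⟩ with hi0
  have hfix : ∀ y : G ⧸ H, g • y = y := by
    intro y
    by_contra hne
    have h1 := congrFun (congrFun hA (i0, y)) (i0, y)
    have hcond : ¬ (y = g • y) := fun h => hne h.symm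
    have hL : A H ρ g (i0, y) (i0, y) = 0 := by
      show (if h : y = g • y then _ else (0:F)) = 0
      rw [dif_neg hcond]
    rw [hL, Matrix.one_apply_eq] at h1
    exact zero_ne_one h1
  set y0 : G ⧸ H := QuotientGroup.mk (1 : G) with hy0
  have h2 : y0 = g • y0 := (hfix y0).symm
  have hval : ((ρ (uElt H g y0 y0 h2) : GL (Fin d) F) : Matrix (Fin d) (Fin d) F) = 1 := by
    ext i j
    have h3 := congrFun (congrFun hA (i, y0)) (j, y0)
    have hL : A H ρ g (i, y0) (j, y0)
        = (ρ (uElt H g y0 y0 h2) : Matrix (Fin d) (Fin d) F) i j := by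
      show (if h : y0 = g • y0 then _ else (0:F)) = _
      rw [dif_pos h2]
    rw [hL] at h3
    rw [h3]
    simp [Matrix.one_apply, Prod.ext_iff]
  have hone : ρ (uElt H g y0 y0 h2) = 1 := Units.ext (by rw [hval, Units.val_one])
  have hu : uElt H g y0 y0 h2 = 1 := hρ (by rw [hone, _root_.map_one])
  have h4 : (Quotient.out y0)⁻¹ * (g * Quotient.out y0) = 1 := congrArg Subtype.val hu
  have h5 : g = Quotient.out y0 * ((Quotient.out y0)⁻¹ * (g * Quotient.out y0)) *
      (Quotient.out y0)⁻¹ := by group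
  rw [h4] at h5
  simpa using h5

lemma A_pow (g : G) (k : ℕ) : A H ρ (g ^ k) = (A H ρ g) ^ k :=
  map_pow (Ahom H ρ) g k

lemma block_unipotent (hd : 0 < d) (g : G) (hfix : ∀ y : G ⧸ H, g • y = y)
    (hU : (A H ρ g - 1) ^ (Fintype.card (Fin d × (G ⧸ H))) = 0) (y : G ⧸ H) :
    IsUnipotent (ρ (uElt H g y y (hfix y).symm)) := by
  set D := Fintype.card (Fin d × (G ⧸ H)) with hD
  set B : (G ⧸ H) → Matrix (Fin d) (Fin d) F :=
    fun y => (ρ (uElt H g y y (hfix y).symm) : Matrix (Fin d) (Fin d) F) with hB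
  have hA : A H ρ g = Matrix.blockDiagonal B := by
    ext ⟨i, y1⟩ ⟨j, y2⟩
    by_cases h : y1 = y2
    · subst h
      rw [Matrix.blockDiagonal_apply_eq]
      show (if hh : y1 = g • y1 then
          (ρ (uElt H g y1 y1 hh) : Matrix (Fin d) (Fin d) F) i j else 0) = B y1 i j
      rw [dif_pos (hfix y1).symm]
    · rw [Matrix.blockDiagonal_apply_ne _ _ _ h]
      show (if hh : y1 = g • y2 then _ else (0:F)) = 0
      rw [dif_neg (by rw [hfix y2]; exact h)]
  have hBD : Matrix.blockDiagonal ((fun y => B y - 1) ^ D) = 0 := by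
    rw [Matrix.blockDiagonal_pow]
    have : Matrix.blockDiagonal (fun y => B y - 1) = A H ρ g - 1 := by
      have h0 : (fun y : G ⧸ H => B y - 1) = B - 1 := rfl
      rw [h0, Matrix.blockDiagonal_sub, Matrix.blockDiagonal_one, hA]
    rw [this, hU]
  have hzero : ((fun y => B y - 1) ^ D) = 0 := by
    apply Matrix.blockDiagonal_injective
    rw [hBD, Matrix.blockDiagonal_zero]
  have hy : (B y - 1) ^ D = 0 := by
    have := congrFun hzero y
    simpa [Pi.pow_apply] using this
  show ((ρ (uElt H g y y (hfix y).symm) : Matrix (Fin d) (Fin d) F) - 1) ^ d = 0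
  have := matrix_pow_card_eq_zero hy
  rwa [Fintype.card_fin] at this

end InducedRepAux

open InducedRepAux in
/-- The induced representation of `G` from a faithful representation of a finite-index
subgroup `H`, packaged with the properties needed for the NIU and VUF arguments. -/
lemma induced_exists {G : Type} [Group G] (H : Subgroup G) (hH : H.FiniteIndex)
    {d : ℕ} (hd : 0 < d) {F : Type} [Field F] (ρ : ↥H →* GL (Fin d) F)
    (hinj : Function.Injective ρ) :
    ∃ d' : ℕ, 0 < d' ∧ ∃ ρ' : G →* GL (Fin d') F, Function.Injective ρ' ∧
      (∀ g : G, IsUnipotent (ρ' g) → ∃ k : ℕ, 0 < k ∧ ∃ u : ↥H,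
        IsUnipotent (ρ u) ∧ ∃ y : G, (u : G) = y⁻¹ * g ^ k * y) ∧
      (∀ N : Subgroup G, N.Normal → N ≤ H → ∀ g ∈ N, IsUnipotent (ρ' g) →
        ∃ u : ↥H, IsUnipotent (ρ u) ∧ (u : G) ∈ N ∧ ∃ y : G, (u : G) = y⁻¹ * g * y) := by
  haveI := hH
  letI : Fintype (G ⧸ H) := Fintype.ofFinite _
  letI : DecidableEq (G ⧸ H) := Classical.decEq _
  haveI : Nonempty (Fin d) := ⟨⟨0, hd⟩⟩
  set d' := Fintype.card (Fin d × (G ⧸ H)) with hd'def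
  have hd' : 0 < d' := Fintype.card_pos
  set e := Fintype.equivFin (Fin d × (G ⧸ H)) with he
  set φ := Matrix.reindexAlgEquiv F F e with hφ
  set μ : (Matrix (Fin d × (G ⧸ H)) (Fin d × (G ⧸ H)) F)ˣ ≃* (GL (Fin d') F) :=
    Units.mapEquiv φ.toRingEquiv.toMulEquiv with hμ
  set ρ' : G →* GL (Fin d') F := μ.toMonoidHom.comp (rep H ρ) with hρ'
  have hcoe : ∀ g : G, ((ρ' g : GL (Fin d') F) : Matrix (Fin d') (Fin d') F)
      = φ (A H ρ g) := by
    intro g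
    show ((μ (rep H ρ g) : (Matrix (Fin d') (Fin d') F)ˣ) : Matrix (Fin d') (Fin d') F) = _
    rw [hμ, Units.coe_mapEquiv]
    rfl
  have hUiff : ∀ g : G, IsUnipotent (ρ' g) ↔ (A H ρ g - 1) ^ d' = 0 := by
    intro g
    have h1 : ((ρ' g : GL (Fin d') F) : Matrix (Fin d') (Fin d') F) - 1
        = φ (A H ρ g - 1) := by
      rw [hcoe g, _root_.map_sub, _root_.map_one]
    show (((ρ' g : GL (Fin d') F) : Matrix (Fin d') (Fin d') F) - 1) ^ d' = 0 ↔ _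
    rw [h1, ← _root_.map_pow]
    exact ⟨fun h => φ.injective (by rw [h, _root_.map_zero]), fun h => by rw [h, _root_.map_zero]⟩
  refine ⟨d', hd', ρ', ?_, ?_, ?_⟩
  · exact fun a b h => rep_injective H ρ hd hinj (μ.injective h)
  · -- NIU auxiliary property
    intro g hU
    set σ := MulAction.toPermHom G (G ⧸ H) with hσ
    set k := orderOf (σ g) with hk
    have hkpos : 0 < k := orderOf_pos (σ g)
    have hfix : ∀ y : G ⧸ H, (g ^ k) • y = y := by
      intro y
      have h1 : σ (g ^ k) = 1 := by rw [_root_.map_pow, pow_orderOf_eq_one]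
      have h2 := Equiv.Perm.ext_iff.mp h1 y
      exact h2
    have hU1 : (A H ρ g - 1) ^ d' = 0 := (hUiff g).mp hU
    have hU2 : (A H ρ (g ^ k) - 1) ^ d' = 0 := by
      rw [A_pow]; exact sub_one_pow_of_pow hU1 k
    set y0 : G ⧸ H := QuotientGroup.mk (1 : G) with hy0
    refine ⟨k, hkpos, uElt H (g ^ k) y0 y0 (hfix y0).symm, ?_, Quotient.out y0, ?_⟩
    · exact block_unipotent H ρ hd (g ^ k) hfix hU2 y0
    · show (Quotient.out y0)⁻¹ * (g ^ k * Quotient.out y0) = _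
      group
  · -- VUF auxiliary property
    intro N hNn hNH g hgN hU
    have hconj : ∀ y : G, y⁻¹ * g * y ∈ N := by
      intro y
      have := hNn.conj_mem g hgN y⁻¹
      rwa [inv_inv] at this
    have hfix : ∀ y : G ⧸ H, g • y = y := by
      intro y
      have hmem : (Quotient.out y)⁻¹ * g * Quotient.out y ∈ H := hNH (hconj _)
      rw [← mk_mul_out H g y]
      conv_rhs => rw [← QuotientGroup.out_eq' y]
      apply QuotientGroup.eq.mpr
      have heq : (g * Quotient.out y)⁻¹ * Quotient.out y
          = ((Quotient.out y)⁻¹ * g * Quotient.out y)⁻¹ := by group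
      rw [heq]
      exact H.inv_mem hmem
    have hU1 : (A H ρ g - 1) ^ d' = 0 := (hUiff g).mp hU
    set y0 : G ⧸ H := QuotientGroup.mk (1 : G) with hy0
    refine ⟨uElt H g y0 y0 (hfix y0).symm, ?_, ?_, Quotient.out y0, ?_⟩
    · exact block_unipotent H ρ hd g hfix hU1 y0
    · show (Quotient.out y0)⁻¹ * (g * Quotient.out y0) ∈ N
      rw [← mul_assoc]
      exact hconj _
    · show (Quotient.out y0)⁻¹ * (g * Quotient.out y0) = _
      group

/-- If a finite index subgroup `H` of `G` has a faithful representation with NIU-linear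
(resp. VUF-linear) image over a field `F`, then `G` has a faithful representation over `F`,
in some dimension, with NIU-linear (resp. VUF-linear) image. -/
theorem stmt_3 {G : Type} [Group G] (H : Subgroup G) (hH : H.FiniteIndex)
    {d : ℕ} (hd : 0 < d) {F : Type} [Field F] :
    ((∃ ρ : ↥H →* GL (Fin d) F, Function.Injective ρ ∧ IsNIU ρ.range) →
      ∃ d' : ℕ, 0 < d' ∧ ∃ ρ : G →* GL (Fin d') F, Function.Injective ρ ∧ IsNIU ρ.range) ∧
    ((∃ ρ : ↥H →* GL (Fin d) F, Function.Injective ρ ∧ IsVUF ρ.range) →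
      ∃ d' : ℕ, 0 < d' ∧ ∃ ρ : G →* GL (Fin d') F, Function.Injective ρ ∧ IsVUF ρ.range) := by
  constructor
  · rintro ⟨ρ, hinj, hNIU⟩
    obtain ⟨d', hd', ρ', hinj', h1, -⟩ := induced_exists H hH hd ρ hinj
    refine ⟨d', hd', ρ', hinj', ?_⟩
    intro M hM hU
    obtain ⟨g, rfl⟩ := hM
    obtain ⟨k, hk, u, huU, y, hy⟩ := h1 g hU
    have hfin : IsOfFinOrder (ρ u) := hNIU _ ⟨u, rfl⟩ huU
    obtain ⟨m, hm, hm1⟩ := isOfFinOrder_iff_pow_eq_one.mp hfin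
    have hum : u ^ m = 1 := hinj (by rw [map_pow, hm1, _root_.map_one])
    have hucoe : ((u : G)) ^ m = 1 := by
      have := congrArg Subtype.val hum
      simpa using this
    have hgk : g ^ k = y * (u : G) * y⁻¹ := by rw [hy]; group
    have hpow : g ^ (k * m) = 1 := by
      rw [pow_mul, hgk, InducedRepAux.conj_pow_grp, hucoe]
      group
    have hgfin : IsOfFinOrder g :=
      isOfFinOrder_iff_pow_eq_one.mpr ⟨k * m, Nat.mul_pos hk hm, hpow⟩
    exact ρ'.isOfFinOrder hgfin
  · rintro ⟨ρ, hinj, K, hKle, hKrel, hKuni⟩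
    obtain ⟨d', hd', ρ', hinj', -, h2⟩ := induced_exists H hH hd ρ hinj
    refine ⟨d', hd', ρ', hinj', ?_⟩
    set K₀ : Subgroup ↥H := K.comap ρ with hK₀
    have hK₀i : K₀.index ≠ 0 := by
      rw [hK₀, Subgroup.index_comap]
      exact hKrel
    set K₁ : Subgroup G := K₀.map H.subtype with hK₁
    have hK₁i : K₁.index ≠ 0 := by
      rw [hK₁, Subgroup.index_map_subtype]
      exact Nat.mul_ne_zero hK₀i hH.index_ne_zero
    haveI : K₁.FiniteIndex := ⟨hK₁i⟩
    set N : Subgroup G := K₁.normalCore with hN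
    haveI hNfi : N.FiniteIndex := Subgroup.finiteIndex_normalCore K₁
    have hNi : N.index ≠ 0 := hNfi.index_ne_zero
    have hNn : N.Normal := Subgroup.normalCore_normal K₁
    have hNle : N ≤ H :=
      le_trans K₁.normalCore_le (by rw [hK₁]; exact Subgroup.map_subtype_le K₀)
    refine ⟨N.map ρ', Subgroup.map_le_range ρ' N, ?_, ?_⟩
    · have h3 := Subgroup.relIndex_comap (H := N.map ρ') ρ' ⊤
      rw [Subgroup.comap_map_eq_self_of_injective hinj', Subgroup.relIndex_top_right] at h3
      rw [← MonoidHom.range_eq_map] at h3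
      rw [← h3]
      exact hNi
    · intro x hx hxU
      obtain ⟨g, hgN, rfl⟩ := Subgroup.mem_map.mp hx
      obtain ⟨u, huU, huN, y, hy⟩ := h2 N hNn hNle g hgN hxU
      have huK₀ : u ∈ K₀ := by
        have hk1 : (u : G) ∈ K₁ := K₁.normalCore_le huN
        obtain ⟨z, hz, hzeq⟩ := Subgroup.mem_map.mp hk1
        have hzu : z = u := Subtype.ext hzeq
        rwa [hzu] at hz
      have h1 : ρ u = 1 := hKuni _ huK₀ huU
      have hu1 : u = 1 := hinj (by rw [h1, _root_.map_one])
      have hcoe1 : (u : G) = 1 := by rw [hu1]; rfl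
      rw [hy] at hcoe1
      have hg1 : g = 1 := by
        have h5 : g = y * (y⁻¹ * g * y) * y⁻¹ := by group
        rw [h5, hcoe1]
        group
      rw [hg1, _root_.map_one]
end

section
/- Let G₁ and G₂ be groups admitting faithful representations into GL(d₁,F₁) and GL(d₂,F₂) respectively, with NIU-linear images, where the fields F₁ and F₂ have the same characteristic. Then the direct product G₁ × G₂ admits a faithful representation into GL(d,F) for some positive integer d and some field F of that same characteristic, whose image is NIU-linear. The same statement holds with NIU-linear replaced by VUF-linear throughout. -/
open Matrix

/-! ### Auxiliary material -/

/-- Two fields of the same characteristic embed into a common field of that characteristic. -/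
theorem exists_common_field {F₁ F₂ : Type} [Field F₁] [Field F₂] (p : ℕ)
    (h₁ : CharP F₁ p) (h₂ : CharP F₂ p) :
    ∃ (K : Type) (_ : Field K), CharP K p ∧ ∃ (_ : F₁ →+* K) (_ : F₂ →+* K), True := by
  have key : ∀ (k : Type) (_ : Field k) (_ : Algebra k F₁) (_ : Algebra k F₂),
      ∃ (K : Type) (_ : Field K) (_ : F₁ →+* K) (_ : F₂ →+* K), True := by
    intro k _ _ _
    obtain ⟨m, hm⟩ := Ideal.exists_maximal (TensorProduct k F₁ F₂)
    letI : Field ((TensorProduct k F₁ F₂) ⧸ m) := Ideal.Quotient.field m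
    exact ⟨_, this,
      (Ideal.Quotient.mk m).comp (Algebra.TensorProduct.includeLeft (S := k)).toRingHom,
      (Ideal.Quotient.mk m).comp (Algebra.TensorProduct.includeRight).toRingHom, trivial⟩
  have main : ∃ (K : Type) (_ : Field K) (_ : F₁ →+* K) (_ : F₂ →+* K), True := by
    rcases CharP.char_is_prime_or_zero F₁ p with hp | hp
    · haveI : Fact p.Prime := ⟨hp⟩
      exact key (ZMod p) inferInstance (ZMod.algebra _ _) (ZMod.algebra _ _)
    · subst hp
      haveI : CharZero F₁ := CharP.charP_to_charZero F₁
      haveI : CharZero F₂ := CharP.charP_to_charZero F₂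
      exact key ℚ inferInstance inferInstance inferInstance
  obtain ⟨K, _, f₁, f₂, -⟩ := main
  exact ⟨K, ‹_›, charP_of_injective_ringHom f₁.injective p, f₁, f₂, trivial⟩

theorem nilp_pow {d : ℕ} {K : Type} [Field K] (N : Matrix (Fin d) (Fin d) K)
    (h : IsNilpotent N) : N ^ d = 0 := by
  have h2 : N.charpoly = Polynomial.X ^ Fintype.card (Fin d) :=
    sub_eq_zero.mp (IsNilpotent.eq_zero (Matrix.isNilpotent_charpoly_sub_pow_of_isNilpotent h))
  have h3 := Matrix.aeval_self_charpoly N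
  rw [h2] at h3
  simpa [Fintype.card_fin] using h3

/-- The block-diagonal ring homomorphism. -/
def fromBlocksRingHom (m n : Type) [Fintype m] [Fintype n] [DecidableEq m] [DecidableEq n]
    (R : Type) [CommRing R] :
    (Matrix m m R × Matrix n n R) →+* Matrix (m ⊕ n) (m ⊕ n) R where
  toFun p := Matrix.fromBlocks p.1 0 0 p.2
  map_one' := Matrix.fromBlocks_one
  map_mul' p q := by simp [Matrix.fromBlocks_multiply]
  map_zero' := by simp [Matrix.fromBlocks_zero]
  map_add' p q := by simp [Matrix.fromBlocks_add]

variable {d₁ d₂ : ℕ} {F K : Type} [Field F] [Field K]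

/-- Entrywise application of a field embedding, on `GL`. -/
def glMap {d : ℕ} (f : F →+* K) : GL (Fin d) F →* GL (Fin d) K :=
  Units.map (f.mapMatrix : Matrix (Fin d) (Fin d) F →+* Matrix (Fin d) (Fin d) K).toMonoidHom

theorem glMap_injective {d : ℕ} (f : F →+* K) : Function.Injective (glMap (d := d) f) :=
  Units.map_injective (Matrix.map_injective f.injective)

theorem isUnipotent_glMap_iff {d : ℕ} (f : F →+* K) (M : GL (Fin d) F) :
    IsUnipotent (glMap f M) ↔ IsUnipotent M := by
  unfold IsUnipotent glMap
  rw [show ((Units.map (f.mapMatrix :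
      Matrix (Fin d) (Fin d) F →+* Matrix (Fin d) (Fin d) K).toMonoidHom M :
      GL (Fin d) K) : Matrix (Fin d) (Fin d) K) = f.mapMatrix (M : Matrix (Fin d) (Fin d) F)
      from rfl]
  rw [← _root_.map_one f.mapMatrix, ← map_sub, ← map_pow, ← _root_.map_zero f.mapMatrix]
  exact ⟨fun h => Matrix.map_injective f.injective h, fun h => by rw [h]⟩

/-- Block diagonal, reindexed to `Fin (d₁ + d₂)`. -/
def blockRingHom (d₁ d₂ : ℕ) (K : Type) [Field K] :
    (Matrix (Fin d₁) (Fin d₁) K × Matrix (Fin d₂) (Fin d₂) K) →+*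
      Matrix (Fin (d₁ + d₂)) (Fin (d₁ + d₂)) K :=
  ((Matrix.reindexAlgEquiv K K finSumFinEquiv).toRingEquiv.toRingHom).comp
    (fromBlocksRingHom (Fin d₁) (Fin d₂) K)

theorem blockRingHom_injective : Function.Injective (blockRingHom d₁ d₂ K) := by
  intro p q h
  have h0 := (Matrix.reindexAlgEquiv K K finSumFinEquiv).injective h
  have h11 := congrArg Matrix.toBlocks₁₁ h0
  have h22 := congrArg Matrix.toBlocks₂₂ h0
  simp [fromBlocksRingHom, Matrix.toBlocks_fromBlocks₁₁, Matrix.toBlocks_fromBlocks₂₂] at h11 h22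
  exact Prod.ext h11 h22

/-- Block diagonal embedding `GL(d₁,K) × GL(d₂,K) →* GL(d₁+d₂,K)`. -/
def blockGL (d₁ d₂ : ℕ) (K : Type) [Field K] :
    (GL (Fin d₁) K × GL (Fin d₂) K) →* GL (Fin (d₁ + d₂)) K :=
  (Units.map (blockRingHom d₁ d₂ K).toMonoidHom).comp (MulEquiv.prodUnits.symm).toMonoidHom

theorem blockGL_injective : Function.Injective (blockGL d₁ d₂ K) :=
  (Units.map_injective (blockRingHom_injective)).comp (MulEquiv.prodUnits.symm).injective

theorem isUnipotent_blockGL (A : GL (Fin d₁) K) (B : GL (Fin d₂) K)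
    (h : IsUnipotent (blockGL d₁ d₂ K (A, B))) : IsUnipotent A ∧ IsUnipotent B := by
  unfold IsUnipotent at h ⊢
  have hc : ((blockGL d₁ d₂ K (A, B) : GL (Fin (d₁ + d₂)) K) :
      Matrix (Fin (d₁ + d₂)) (Fin (d₁ + d₂)) K)
      = blockRingHom d₁ d₂ K ((A : Matrix (Fin d₁) (Fin d₁) K),
        (B : Matrix (Fin d₂) (Fin d₂) K)) := rfl
  rw [hc, ← _root_.map_one (blockRingHom d₁ d₂ K), ← map_sub, ← map_pow,
    ← _root_.map_zero (blockRingHom d₁ d₂ K)] at h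
  have h2 := blockRingHom_injective h
  rw [Prod.pow_def] at h2
  have hA : ((A : Matrix (Fin d₁) (Fin d₁) K) - 1) ^ (d₁ + d₂) = 0 := congrArg Prod.fst h2
  have hB : ((B : Matrix (Fin d₂) (Fin d₂) K) - 1) ^ (d₁ + d₂) = 0 := congrArg Prod.snd h2
  exact ⟨nilp_pow _ ⟨d₁ + d₂, hA⟩, nilp_pow _ ⟨d₁ + d₂, hB⟩⟩

theorem isOfFinOrder_of_injective {G H : Type*} [Group G] [Group H] (f : G →* H)
    (hf : Function.Injective f) {a : G} (h : IsOfFinOrder (f a)) : IsOfFinOrder a := by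
  rw [isOfFinOrder_iff_pow_eq_one] at h ⊢
  obtain ⟨n, hn, he⟩ := h
  exact ⟨n, hn, hf (by rw [map_pow, he, _root_.map_one])⟩

/-- If `G₁` and `G₂` admit faithful representations with NIU-linear (resp. VUF-linear)
images over fields of the same characteristic `p`, then so does their direct product
`G₁ × G₂`, over some field of characteristic `p`. -/
theorem stmt_4 {G₁ G₂ : Type} [Group G₁] [Group G₂]
    {d₁ d₂ : ℕ} (hd₁ : 0 < d₁) (hd₂ : 0 < d₂)
    {F₁ F₂ : Type} [Field F₁] [Field F₂] (p : ℕ) (h₁ : CharP F₁ p) (h₂ : CharP F₂ p) :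
    ((∃ ρ₁ : G₁ →* GL (Fin d₁) F₁, Function.Injective ρ₁ ∧ IsNIU ρ₁.range) →
     (∃ ρ₂ : G₂ →* GL (Fin d₂) F₂, Function.Injective ρ₂ ∧ IsNIU ρ₂.range) →
      ∃ (d : ℕ) (F : Type) (_ : Field F), 0 < d ∧ CharP F p ∧
        ∃ ρ : G₁ × G₂ →* GL (Fin d) F, Function.Injective ρ ∧ IsNIU ρ.range) ∧
    ((∃ ρ₁ : G₁ →* GL (Fin d₁) F₁, Function.Injective ρ₁ ∧ IsVUF ρ₁.range) →
     (∃ ρ₂ : G₂ →* GL (Fin d₂) F₂, Function.Injective ρ₂ ∧ IsVUF ρ₂.range) →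
      ∃ (d : ℕ) (F : Type) (_ : Field F), 0 < d ∧ CharP F p ∧
        ∃ ρ : G₁ × G₂ →* GL (Fin d) F, Function.Injective ρ ∧ IsVUF ρ.range) := by
  obtain ⟨K, _, hK, f₁, f₂, -⟩ := exists_common_field p h₁ h₂
  constructor
  · rintro ⟨ρ₁, hρ₁, hNIU₁⟩ ⟨ρ₂, hρ₂, hNIU₂⟩
    refine ⟨d₁ + d₂, K, ‹_›, by omega, hK, ?_⟩
    set σ₁ : G₁ →* GL (Fin d₁) K := (glMap f₁).comp ρ₁ with hσ₁
    set σ₂ : G₂ →* GL (Fin d₂) K := (glMap f₂).comp ρ₂ with hσ₂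
    refine ⟨(blockGL d₁ d₂ K).comp (σ₁.prodMap σ₂), ?_, ?_⟩
    · exact blockGL_injective.comp
        (((glMap_injective f₁).comp hρ₁).prodMap ((glMap_injective f₂).comp hρ₂))
    · rintro g ⟨⟨g₁, g₂⟩, rfl⟩ hg
      have hb := isUnipotent_blockGL (σ₁ g₁) (σ₂ g₂) hg
      have hu₁ : IsUnipotent (ρ₁ g₁) := (isUnipotent_glMap_iff f₁ (ρ₁ g₁)).mp hb.1
      have hu₂ : IsUnipotent (ρ₂ g₂) := (isUnipotent_glMap_iff f₂ (ρ₂ g₂)).mp hb.2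
      have ho₁ : IsOfFinOrder g₁ :=
        isOfFinOrder_of_injective ρ₁ hρ₁ (hNIU₁ _ ⟨g₁, rfl⟩ hu₁)
      have ho₂ : IsOfFinOrder g₂ :=
        isOfFinOrder_of_injective ρ₂ hρ₂ (hNIU₂ _ ⟨g₂, rfl⟩ hu₂)
      exact MonoidHom.isOfFinOrder _ (ho₁.prod_mk ho₂)
  · rintro ⟨ρ₁, hρ₁, H₁, hH₁le, hH₁ind, hH₁uni⟩ ⟨ρ₂, hρ₂, H₂, hH₂le, hH₂ind, hH₂uni⟩
    refine ⟨d₁ + d₂, K, ‹_›, by omega, hK, ?_⟩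
    set σ₁ : G₁ →* GL (Fin d₁) K := (glMap f₁).comp ρ₁ with hσ₁
    set σ₂ : G₂ →* GL (Fin d₂) K := (glMap f₂).comp ρ₂ with hσ₂
    set ρ : G₁ × G₂ →* GL (Fin (d₁ + d₂)) K := (blockGL d₁ d₂ K).comp (σ₁.prodMap σ₂) with hρdef
    have hρinj : Function.Injective ρ := blockGL_injective.comp
        (((glMap_injective f₁).comp hρ₁).prodMap ((glMap_injective f₂).comp hρ₂))
    refine ⟨ρ, hρinj, ?_⟩
    set P : Subgroup (G₁ × G₂) := (H₁.comap ρ₁).prod (H₂.comap ρ₂) with hP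
    refine ⟨P.map ρ, ?_, ?_, ?_⟩
    · rw [MonoidHom.range_eq_map]
      exact Subgroup.map_mono le_top
    · have hmap : (P.map ρ).relIndex ρ.range = P.index := by
        rw [MonoidHom.range_eq_map, ← Subgroup.relIndex_comap,
          Subgroup.comap_map_eq_self_of_injective hρinj, Subgroup.relIndex_top_right]
      rw [hmap, Subgroup.index_prod]
      have e₁ : (H₁.comap ρ₁).index = H₁.relIndex ρ₁.range := by
        rw [← Subgroup.relIndex_top_right, Subgroup.relIndex_comap, ← MonoidHom.range_eq_map]
      have e₂ : (H₂.comap ρ₂).index = H₂.relIndex ρ₂.range := by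
        rw [← Subgroup.relIndex_top_right, Subgroup.relIndex_comap, ← MonoidHom.range_eq_map]
      rw [e₁, e₂]
      exact Nat.mul_ne_zero hH₁ind hH₂ind
    · rintro h ⟨⟨g₁, g₂⟩, ⟨hg₁, hg₂⟩, rfl⟩ hu
      have hb := isUnipotent_blockGL (σ₁ g₁) (σ₂ g₂) hu
      have hu₁ : IsUnipotent (ρ₁ g₁) := (isUnipotent_glMap_iff f₁ (ρ₁ g₁)).mp hb.1
      have hu₂ : IsUnipotent (ρ₂ g₂) := (isUnipotent_glMap_iff f₂ (ρ₂ g₂)).mp hb.2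
      have hg₁' : g₁ = 1 := hρ₁ (by rw [hH₁uni _ hg₁ hu₁, _root_.map_one])
      have hg₂' : g₂ = 1 := hρ₂ (by rw [hH₂uni _ hg₂ hu₂, _root_.map_one])
      rw [show ((g₁, g₂) : G₁ × G₂) = 1 from Prod.ext hg₁' hg₂', _root_.map_one]
end

section
/- Let G be a subgroup of GL(d,F) for some field F and positive integer d, suppose G is NIU-linear, and let A be an abelian subgroup of G which is central in G. Let π : G → G/[G,G] be the quotient homomorphism onto the abelianisation of G. Then every element of A lying in the kernel of π has finite order. -/
open Matrix Polynomial

lemma charpoly_eval_aux {m : Type*} [DecidableEq m] [Fintype m] {K : Type*} [Field K]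
    (A : Matrix m m K) (t : K) : (A.charpoly).eval t = (t • (1 : Matrix m m K) - A).det := by
  rw [Matrix.charpoly, ← Polynomial.coe_evalRingHom, RingHom.map_det]
  congr 1
  ext i j
  by_cases h : i = j <;>
    simp [h, charmatrix_apply, Matrix.one_apply, Matrix.smul_apply, Matrix.diagonal_apply]

lemma det_smul_one_add_nilpotent {m : Type*} [DecidableEq m] [Fintype m] {K : Type*} [Field K]
    (c : K) (N : Matrix m m K) (hN : IsNilpotent N) :
    (c • (1 : Matrix m m K) + N).det = c ^ Fintype.card m := by
  have h1 : (-N).charpoly = X ^ Fintype.card m := by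
    have h := Matrix.isNilpotent_charpoly_sub_pow_of_isNilpotent (M := -N) hN.neg
    rw [← sub_eq_zero]
    exact h.eq_zero
  have := charpoly_eval_aux (-N) c
  rw [h1] at this
  simp only [eval_pow, eval_X, sub_neg_eq_add] at this
  exact this.symm
  

open Module in
lemma det_of_nilpotent_sub {K : Type*} [Field K] {W : Type*} [AddCommGroup W] [Module K W]
    [FiniteDimensional K W] (e : Module.End K W) (c : K) (h : IsNilpotent (e - c • 1)) :
    LinearMap.det e = c ^ finrank K W := by
  classical
  let b := finBasis K W
  rw [← LinearMap.det_toMatrix b]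
  have hN : IsNilpotent (LinearMap.toMatrix b b e - c • 1) := by
    have := h.map (LinearMap.toMatrixAlgEquiv b)
    rw [map_sub, _root_.map_smul, _root_.map_one] at this
    exact this
  have : LinearMap.toMatrix b b e = c • 1 + (LinearMap.toMatrix b b e - c • 1) := by rw [add_comm, sub_add_cancel]
  rw [this, det_smul_one_add_nilpotent c _ hN]
  simp [finrank_fin_fun]

set_option maxHeartbeats 2000000 in
/-- If `G ≤ GL(d,F)` is NIU-linear and `A` is an abelian (indeed central) subgroup of `G`,
then every element of `A` lying in the kernel of the abelianisation map `G → G/[G,G]`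
has finite order. -/
theorem stmt_6 {d : ℕ} (hd : 0 < d) {F : Type} [Field F] (G : Subgroup (GL (Fin d) F))
    (hNIU : ∀ g ∈ G, IsUnipotent g → IsOfFinOrder g)
    (A : Subgroup ↥G) (hA : A ≤ Subgroup.center ↥G) :
    ∀ a : ↥G, a ∈ A → Abelianization.of a = 1 → IsOfFinOrder a := by
  classical
  intro a hmemA hker
  set K := AlgebraicClosure F with hK
  let V := Fin d → K
  let Φ : Matrix (Fin d) (Fin d) F → Module.End K V :=
    fun M => Matrix.toLinAlgEquiv' ((algebraMap F K).mapMatrix M)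
  have hΦmul : ∀ M₁ M₂, Φ (M₁ * M₂) = Φ M₁ * Φ M₂ := by
    intro M₁ M₂
    simp only [Φ, _root_.map_mul]
  have hΦone : Φ 1 = 1 := by
    simp only [Φ, _root_.map_one]
  have hΦsub : ∀ M₁ M₂, Φ (M₁ - M₂) = Φ M₁ - Φ M₂ := by
    intro M₁ M₂
    simp only [Φ, map_sub]
  have hΦpow : ∀ M n, Φ (M ^ n) = Φ M ^ n := by
    intro M n
    simp only [Φ, map_pow]
  have hΦzero : Φ 0 = 0 := by
    simp only [Φ, map_zero]
  have hΦinj : Function.Injective Φ := by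
    intro M₁ M₂ h
    have h2 := Matrix.toLinAlgEquiv'.injective h
    simp only [RingHom.mapMatrix_apply] at h2
    exact Matrix.map_injective (algebraMap F K).injective h2
  -- the endomorphism corresponding to `a`
  set f : Module.End K V := Φ ((a : GL (Fin d) F) : Matrix (Fin d) (Fin d) F) with hf
  -- commutation
  have hcomm : ∀ g : ↥G, Commute f (Φ ((g : GL (Fin d) F) : Matrix (Fin d) (Fin d) F)) := by
    intro g
    have h1 : (g : ↥G) * a = a * g := (Subgroup.mem_center_iff.mp (hA hmemA)) g
    have h2 : ((g : GL (Fin d) F) : Matrix (Fin d) (Fin d) F) *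
        ((a : GL (Fin d) F) : Matrix (Fin d) (Fin d) F) =
        ((a : GL (Fin d) F) : Matrix (Fin d) (Fin d) F) *
        ((g : GL (Fin d) F) : Matrix (Fin d) (Fin d) F) := by
      have := congrArg (fun x : ↥G => ((x : GL (Fin d) F) : Matrix (Fin d) (Fin d) F)) h1
      simpa using this
    show f * _ = _ * f
    rw [hf, ← hΦmul, ← hΦmul, h2]
  have hmapsTo : ∀ (g : ↥G) (μ : K),
      Set.MapsTo (Φ ((g : GL (Fin d) F) : Matrix (Fin d) (Fin d) F))
        (f.maxGenEigenspace μ) (f.maxGenEigenspace μ) :=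
    fun g μ => Module.End.mapsTo_maxGenEigenspace_of_comm (hcomm g) μ
  -- the character
  let χ : K → ↥G → K := fun μ g => LinearMap.det
    ((Φ ((g : GL (Fin d) F) : Matrix (Fin d) (Fin d) F)).restrict (hmapsTo g μ))
  have hχmul : ∀ μ g h, χ μ (g * h) = χ μ g * χ μ h := by
    intro μ g h
    have : (Φ (((g * h : ↥G) : GL (Fin d) F) : Matrix (Fin d) (Fin d) F)).restrict
        (hmapsTo (g * h) μ) =
        (Φ ((g : GL (Fin d) F) : Matrix (Fin d) (Fin d) F)).restrict (hmapsTo g μ) *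
        (Φ ((h : GL (Fin d) F) : Matrix (Fin d) (Fin d) F)).restrict (hmapsTo h μ) := by
      ext x
      have hcoe : (((g * h : ↥G) : GL (Fin d) F) : Matrix (Fin d) (Fin d) F) =
          ((g : GL (Fin d) F) : Matrix (Fin d) (Fin d) F) *
          ((h : GL (Fin d) F) : Matrix (Fin d) (Fin d) F) := by simp
      simp [LinearMap.restrict_apply, hcoe, hΦmul, Module.End.mul_apply]
      rfl
    rw [show χ μ (g * h) = LinearMap.det _ from rfl, this, _root_.map_mul]
  have hχone : ∀ μ, χ μ 1 = 1 := by
    intro μ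
    have : (Φ (((1 : ↥G) : GL (Fin d) F) : Matrix (Fin d) (Fin d) F)).restrict
        (hmapsTo 1 μ) = LinearMap.id (R := K) (M := f.maxGenEigenspace μ) := by
      ext x
      have hcoe : (((1 : ↥G) : GL (Fin d) F) : Matrix (Fin d) (Fin d) F) = 1 := by simp
      simp [LinearMap.restrict_apply, hcoe, hΦone]
    rw [show χ μ 1 = LinearMap.det _ from rfl, this, LinearMap.det_id]
  have hχinv : ∀ μ g, χ μ g * χ μ g⁻¹ = 1 := by
    intro μ g
    rw [← hχmul, mul_inv_cancel, hχone]
  -- χ kills the commutator subgroup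
  have hcomm_mem : a ∈ commutator ↥G := by
    rw [commutator]
    exact (QuotientGroup.eq_one_iff _).mp hker
  have hχa : ∀ μ, χ μ a = 1 := by
    intro μ
    rw [commutator_eq_closure] at hcomm_mem
    refine Subgroup.closure_induction ?_ (hχone μ) ?_ ?_ hcomm_mem
    · rintro x ⟨g, h, rfl⟩
      show χ μ (g * h * g⁻¹ * h⁻¹) = 1
      rw [hχmul, hχmul, hχmul]
      have h1 := hχinv μ g
      have h2 := hχinv μ h
      calc χ μ g * χ μ h * χ μ g⁻¹ * χ μ h⁻¹
          = (χ μ g * χ μ g⁻¹) * (χ μ h * χ μ h⁻¹) := by ring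
        _ = 1 := by rw [h1, h2, one_mul]
    · intro x y _ _ hx hy
      rw [hχmul, hx, hy, one_mul]
    · intro x _ hx
      have := hχinv μ x
      rw [hx, one_mul] at this
      exact this
  -- each eigenvalue satisfies μ ^ finrank = 1
  have hdet : ∀ μ : K, μ ^ (Module.finrank K (f.maxGenEigenspace μ)) = 1 := by
    intro μ
    have hnil : IsNilpotent
        ((Φ ((a : GL (Fin d) F) : Matrix (Fin d) (Fin d) F)).restrict (hmapsTo a μ)
          - μ • 1) := by
      have h1 := Module.End.isNilpotent_restrict_maxGenEigenspace_sub_algebraMap f μ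
      have h2 : (Φ ((a : GL (Fin d) F) : Matrix (Fin d) (Fin d) F)).restrict (hmapsTo a μ)
          - μ • 1 = (f - algebraMap K (Module.End K V) μ).restrict
            (Module.End.mapsTo_maxGenEigenspace_of_comm
              (Algebra.mul_sub_algebraMap_commutes f μ) μ) := by
        ext x
        simp only [LinearMap.sub_apply, LinearMap.smul_apply, Module.End.one_apply,
          AddSubgroupClass.coe_sub, SetLike.val_smul, LinearMap.restrict_coe_apply,
          Module.algebraMap_end_apply]
        rfl
      rw [h2]
      exact h1
    have := det_of_nilpotent_sub _ μ hnil
    rw [show LinearMap.det ((Φ ((a : GL (Fin d) F) : Matrix (Fin d) (Fin d) F)).restrict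
      (hmapsTo a μ)) = χ μ a from rfl, hχa μ] at this
    exact this.symm
  have hfinrankV : Module.finrank K V = d := Module.finrank_fin_fun K
  have hμfact : ∀ μ : K, f.maxGenEigenspace μ ≠ ⊥ → μ ^ d.factorial = 1 := by
    intro μ hne
    have hpos : 0 < Module.finrank K (f.maxGenEigenspace μ) := by
      rw [Module.finrank_pos_iff]
      exact Submodule.nontrivial_iff_ne_bot.mpr hne
    have hle : Module.finrank K (f.maxGenEigenspace μ) ≤ d := by
      exact le_trans (Submodule.finrank_le _) (le_of_eq hfinrankV)
    obtain ⟨c, hc⟩ := Nat.dvd_factorial hpos hle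
    rw [hc, pow_mul, hdet μ, one_pow]
  set N := d.factorial with hNdef
  have hNne : N ≠ 0 := Nat.factorial_ne_zero d
  -- the key nilpotency statement
  have hzero : ((f ^ N - 1 : Module.End K V)) ^ d = 0 := by
    apply LinearMap.ext
    intro x
    rw [LinearMap.zero_apply]
    have hx : x ∈ ⨆ μ : K, f.maxGenEigenspace μ := by
      rw [Module.End.iSup_maxGenEigenspace_eq_top]; trivial
    refine Submodule.iSup_induction (motive := fun y => (((f ^ N - 1) ^ d) y = 0)) _ hx ?_ (by simp)
      (fun u v hu hv => by
        have hu' : ((f ^ N - 1) ^ d) u = 0 := hu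
        have hv' : ((f ^ N - 1) ^ d) v = 0 := hv
        show ((f ^ N - 1) ^ d) (u + v) = 0
        rw [map_add, hu', hv', add_zero])
    intro μ x hxμ
    by_cases hμ : f.maxGenEigenspace μ = ⊥
    · rw [hμ, Submodule.mem_bot] at hxμ
      rw [hxμ, map_zero]
    have hμN : μ ^ N = 1 := hμfact μ hμ
    have hcomm1 : Commute f (μ • (1 : Module.End K V)) := by
      show f * (μ • 1) = (μ • 1) * f
      rw [mul_smul_comm, smul_mul_assoc, mul_one, one_mul]
    set s := ∑ i ∈ Finset.range N, f ^ i * (μ • (1 : Module.End K V)) ^ (N - 1 - i) with hs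
    have hgeom := hcomm1.geom_sum₂_mul N
    have hkey : f ^ N - 1 = s * (f - μ • 1) := by
      rw [hs, hgeom, _root_.smul_pow, hμN, one_pow, one_smul]
    have hcommS : Commute s (f - μ • 1) := by
      apply Commute.sum_left
      intro i _
      have h1 : Commute (f ^ i) (f - μ • 1) :=
        ((Commute.refl f).sub_right hcomm1).pow_left i
      have h2 : Commute ((μ • (1 : Module.End K V)) ^ (N - 1 - i)) (f - μ • 1) :=
        ((hcomm1.symm).sub_right (Commute.refl _)).pow_left _
      exact h1.mul_left h2
    have hkill : ((f - μ • (1 : Module.End K V)) ^ d) x = 0 := by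
      have h3 := Module.End.maxGenEigenspace_eq_genEigenspace_finrank f μ
      rw [hfinrankV] at h3
      have hx2 : x ∈ f.genEigenspace μ (d : ℕ) := by rw [← h3]; exact hxμ
      rw [Module.End.genEigenspace_nat, LinearMap.mem_ker] at hx2
      exact hx2
    rw [hkey, hcommS.mul_pow, Module.End.mul_apply, hkill, map_zero]
  -- conclude unipotency of a ^ N
  have hunip : IsUnipotent ((a : GL (Fin d) F) ^ N) := by
    show ((((a : GL (Fin d) F) ^ N : GL (Fin d) F) : Matrix (Fin d) (Fin d) F) - 1) ^ d = 0
    rw [Units.val_pow_eq_pow_val]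
    apply hΦinj
    rw [hΦpow _ d, hΦsub, hΦpow, hΦone, hΦzero, ← hf, hzero]
  have hmem : ((a : GL (Fin d) F) ^ N) ∈ G := pow_mem a.2 N
  have hfin : IsOfFinOrder ((a : GL (Fin d) F) ^ N) := hNIU _ hmem hunip
  have hfin2 : IsOfFinOrder (a : GL (Fin d) F) := hfin.of_pow hNne
  rw [isOfFinOrder_iff_pow_eq_one] at hfin2 ⊢
  obtain ⟨n, hn, h1⟩ := hfin2
  refine ⟨n, hn, ?_⟩
  apply Subtype.ext
  rw [SubmonoidClass.coe_pow, h1]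
  rfl
end

section
/- Let F be any field and let ε₁, …, ε_N be finitely many absolute values on F. Then for any positive integer d there exists a function f : GL(d,F) → [0,∞) which is subadditive, i.e. f(MN) ≤ f(M) + f(N) for all M, N ∈ GL(d,F), and which has the following property: if M ∈ GL(d,F) has an eigenvalue λ ∈ F (i.e. λ is a nonzero element of F with det(M − λI) = 0), then for every 1 ≤ i ≤ N we have f(M) ≥ |log ε_i(λ)|. -/
open Matrix

private def aEnt {F : Type} [Field F] (e : AbsoluteValue F ℝ) {d : ℕ}
    (M : Matrix (Fin d) (Fin d) F) : ℝ :=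
  ∑ j, ∑ k, e (M j k)

private lemma aEnt_nonneg {F : Type} [Field F] (e : AbsoluteValue F ℝ) {d : ℕ}
    (M : Matrix (Fin d) (Fin d) F) : 0 ≤ aEnt e M := by
  apply Finset.sum_nonneg; intro j _; apply Finset.sum_nonneg; intro k _
  exact e.nonneg _

private lemma aEnt_mul_le {F : Type} [Field F] (e : AbsoluteValue F ℝ) {d : ℕ}
    (M M' : Matrix (Fin d) (Fin d) F) : aEnt e (M * M') ≤ aEnt e M * aEnt e M' := by
  unfold aEnt
  calc ∑ j, ∑ k, e ((M * M') j k)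
      ≤ ∑ j, ∑ k, ∑ l, e (M j l) * e (M' l k) := by
        apply Finset.sum_le_sum; intro j _
        apply Finset.sum_le_sum; intro k _
        rw [Matrix.mul_apply]
        refine le_trans (e.sum_le _ _) ?_
        apply Finset.sum_le_sum; intro l _
        rw [e.map_mul]
    _ ≤ ∑ j, ∑ l, e (M j l) * aEnt e M' := by
        apply Finset.sum_le_sum; intro j _
        rw [Finset.sum_comm]
        apply Finset.sum_le_sum; intro l _
        rw [← Finset.mul_sum]
        apply mul_le_mul_of_nonneg_left _ (e.nonneg _)
        exact Finset.single_le_sum (f := fun l' => ∑ k, e (M' l' k))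
          (fun l' _ => Finset.sum_nonneg fun k _ => e.nonneg _) (Finset.mem_univ l)
    _ = (∑ j, ∑ l, e (M j l)) * aEnt e M' := by
        simp [Finset.sum_mul]
    _ = _ := rfl

/-- If `v ≠ 0` and `M *ᵥ v = lam • v` then `e lam ≤ aEnt e M`. -/
private lemma eig_bound {F : Type} [Field F] (e : AbsoluteValue F ℝ) {d : ℕ}
    (M : Matrix (Fin d) (Fin d) F) (lam : F) (v : Fin d → F) (hv : v ≠ 0)
    (hev : M.mulVec v = lam • v) : e lam ≤ aEnt e M := by
  have hne : (Finset.univ : Finset (Fin d)).Nonempty := by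
    by_contra h
    rw [Finset.not_nonempty_iff_eq_empty, Finset.univ_eq_empty_iff] at h
    exact hv (funext fun j => absurd (Finset.mem_univ j) (by simp [h.false j]))
  obtain ⟨j, _, hj⟩ := Finset.exists_max_image Finset.univ (fun j => e (v j)) hne
  have hvj : 0 < e (v j) := by
    obtain ⟨k, hk⟩ := Function.ne_iff.mp hv
    exact lt_of_lt_of_le (e.pos hk) (hj k (Finset.mem_univ k))
  have key : e lam * e (v j) ≤ aEnt e M * e (v j) := by
    calc e lam * e (v j) = e (lam * v j) := (e.map_mul _ _).symm
      _ = e ((M.mulVec v) j) := by rw [hev]; simp [Pi.smul_apply, smul_eq_mul]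
      _ = e (∑ k, M j k * v k) := by simp [Matrix.mulVec, dotProduct]
      _ ≤ ∑ k, e (M j k * v k) := e.sum_le _ _
      _ = ∑ k, e (M j k) * e (v k) := by simp [e.map_mul]
      _ ≤ ∑ k, e (M j k) * e (v j) := by
          apply Finset.sum_le_sum; intro k _
          exact mul_le_mul_of_nonneg_left (hj k (Finset.mem_univ k)) (e.nonneg _)
      _ = (∑ k, e (M j k)) * e (v j) := by rw [Finset.sum_mul]
      _ ≤ aEnt e M * e (v j) := by
          apply mul_le_mul_of_nonneg_right _ (le_of_lt hvj)
          exact Finset.single_le_sum (f := fun j' => ∑ k, e (M j' k))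
            (fun j' _ => Finset.sum_nonneg fun k _ => e.nonneg _) (Finset.mem_univ j)
  exact le_of_mul_le_mul_right key hvj

/-- Given finitely many absolute values `ε₁, …, ε_N` on a field `F` and a dimension `d`,
there is a subadditive function `f : GL(d,F) → [0,∞)` such that whenever `λ ∈ F*` is an
eigenvalue of `M ∈ GL(d,F)`, we have `f(M) ≥ |log εᵢ(λ)|` for every `i`. -/
theorem stmt_14 {F : Type} [Field F] {N : ℕ} (ε : Fin N → AbsoluteValue F ℝ)
    (d : ℕ) (hd : 0 < d) :
    ∃ f : GL (Fin d) F → ℝ,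
      (∀ M : GL (Fin d) F, 0 ≤ f M) ∧
      (∀ M M' : GL (Fin d) F, f (M * M') ≤ f M + f M') ∧
      (∀ (M : GL (Fin d) F) (lam : F), lam ≠ 0 →
        Matrix.det ((M : Matrix (Fin d) (Fin d) F) - lam • 1) = 0 →
        ∀ i : Fin N, |Real.log (ε i lam)| ≤ f M) := by
  classical
  set t : GL (Fin d) F → Fin N → ℝ := fun M i =>
    max (max (aEnt (ε i) (M : Matrix (Fin d) (Fin d) F))
      (aEnt (ε i) ((M⁻¹ : GL (Fin d) F) : Matrix (Fin d) (Fin d) F))) 1 with ht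
  have ht1 : ∀ M i, 1 ≤ t M i := fun M i => le_max_right _ _
  have ht0 : ∀ M i, 0 < t M i := fun M i => lt_of_lt_of_le one_pos (ht1 M i)
  have htaM : ∀ (M : GL (Fin d) F) i,
      aEnt (ε i) (M : Matrix (Fin d) (Fin d) F) ≤ t M i :=
    fun M i => le_trans (le_max_left _ _) (le_max_left _ _)
  have htaMinv : ∀ (M : GL (Fin d) F) i,
      aEnt (ε i) ((M⁻¹ : GL (Fin d) F) : Matrix (Fin d) (Fin d) F) ≤ t M i :=
    fun M i => le_trans (le_max_right _ _) (le_max_left _ _)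
  refine ⟨fun M => ∑ i, Real.log (t M i), ?_, ?_, ?_⟩
  · intro M
    apply Finset.sum_nonneg; intro i _
    exact Real.log_nonneg (ht1 M i)
  · intro M M'
    rw [← Finset.sum_add_distrib]
    apply Finset.sum_le_sum; intro i _
    rw [← Real.log_mul (ne_of_gt (ht0 M i)) (ne_of_gt (ht0 M' i))]
    apply Real.log_le_log (ht0 _ i)
    -- t (M * M') i ≤ t M i * t M' i
    apply max_le
    · apply max_le
      · calc aEnt (ε i) ((M * M' : GL (Fin d) F) : Matrix (Fin d) (Fin d) F)
            = aEnt (ε i) ((M : Matrix (Fin d) (Fin d) F) * (M' : Matrix (Fin d) (Fin d) F)) := by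
              norm_cast
          _ ≤ aEnt (ε i) (M : Matrix (Fin d) (Fin d) F) *
              aEnt (ε i) (M' : Matrix (Fin d) (Fin d) F) := aEnt_mul_le _ _ _
          _ ≤ t M i * t M' i := by
              apply mul_le_mul (htaM M i) (htaM M' i) (aEnt_nonneg _ _)
                (le_of_lt (ht0 M i))
      · calc aEnt (ε i) (((M * M')⁻¹ : GL (Fin d) F) : Matrix (Fin d) (Fin d) F)
            = aEnt (ε i) (((M'⁻¹ : GL (Fin d) F) : Matrix (Fin d) (Fin d) F) *
                ((M⁻¹ : GL (Fin d) F) : Matrix (Fin d) (Fin d) F)) := by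
              rw [_root_.mul_inv_rev]; norm_cast
          _ ≤ aEnt (ε i) ((M'⁻¹ : GL (Fin d) F) : Matrix (Fin d) (Fin d) F) *
              aEnt (ε i) ((M⁻¹ : GL (Fin d) F) : Matrix (Fin d) (Fin d) F) := aEnt_mul_le _ _ _
          _ ≤ t M' i * t M i := by
              apply mul_le_mul (htaMinv M' i) (htaMinv M i) (aEnt_nonneg _ _)
                (le_of_lt (ht0 M' i))
          _ = t M i * t M' i := mul_comm _ _
    · exact one_le_mul_of_one_le_of_one_le (ht1 M i) (ht1 M' i)
  · intro M lam hlam hdet i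
    -- get eigenvector
    obtain ⟨v, hv, hveq⟩ := (Matrix.exists_mulVec_eq_zero_iff).mpr hdet
    have hev : (M : Matrix (Fin d) (Fin d) F).mulVec v = lam • v := by
      have := hveq
      rw [Matrix.sub_mulVec, sub_eq_zero, Matrix.smul_mulVec, Matrix.one_mulVec] at this
      exact this
    have hevinv : ((M⁻¹ : GL (Fin d) F) : Matrix (Fin d) (Fin d) F).mulVec v = lam⁻¹ • v := by
      have h1 : ((M⁻¹ : GL (Fin d) F) : Matrix (Fin d) (Fin d) F).mulVec
          ((M : Matrix (Fin d) (Fin d) F).mulVec v) = v := by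
        rw [Matrix.mulVec_mulVec]
        have : ((M⁻¹ : GL (Fin d) F) : Matrix (Fin d) (Fin d) F) *
            (M : Matrix (Fin d) (Fin d) F) = 1 := by
          norm_cast
          simp
        rw [this, Matrix.one_mulVec]
      rw [hev, Matrix.mulVec_smul] at h1
      have := congrArg (fun w => lam⁻¹ • w) h1
      simpa [smul_smul, inv_mul_cancel₀ hlam] using this
    have h1 : ε i lam ≤ t M i := le_trans (eig_bound (ε i) _ lam v hv hev) (htaM M i)
    have h2 : (ε i lam)⁻¹ ≤ t M i := by
      have := le_trans (eig_bound (ε i) _ lam⁻¹ v hv hevinv) (htaMinv M i)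
      rwa [map_inv₀] at this
    have hpos : 0 < ε i lam := (ε i).pos hlam
    have hle : |Real.log (ε i lam)| ≤ Real.log (t M i) := by
      rw [abs_le]
      constructor
      · have := Real.log_le_log (by positivity : (0:ℝ) < (ε i lam)⁻¹) h2
        rw [Real.log_inv] at this
        linarith
      · exact Real.log_le_log hpos h1
    refine le_trans hle ?_
    apply Finset.single_le_sum (f := fun i => Real.log (t M i))
      (fun i' _ => Real.log_nonneg (ht1 M i')) (Finset.mem_univ i)
end

section
/- Let G be a finitely generated group with finite generating set S, and let τ : G → [0,∞) be the translation length function τ(g) = lim_{n→∞} l_S(gⁿ)/n (this limit exists by subadditivity). Suppose there exists a constant c > 0 such that τ(g) ≥ c for every element g ∈ G of infinite order. Then every finitely generated abelian subgroup A of G is undistorted in G: for any finite generating set T of A there exists k > 0 such that l_S(a) ≥ k · l_T(a) for all a ∈ A. -/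
set_option maxHeartbeats 1000000

/-- The word length of `g` with respect to a generating set `S`: the least `n` such that
`g` is a product of `n` elements of `S ∪ S⁻¹`. -/
noncomputable def wordLength {G : Type*} [Group G] (S : Set G) (g : G) : ℕ :=
  sInf {n | ∃ l : List G, l.length = n ∧ (∀ x ∈ l, x ∈ S ∨ x⁻¹ ∈ S) ∧ l.prod = g}

namespace WL

variable {G : Type*} [Group G] {S : Set G}

lemma exists_list {g : G} (h : g ∈ Subgroup.closure S) :
    ∃ l : List G, (∀ x ∈ l, x ∈ S ∨ x⁻¹ ∈ S) ∧ l.prod = g := by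
  have h' : g ∈ (Subgroup.closure S).toSubmonoid := h
  rw [Subgroup.closure_toSubmonoid] at h'
  obtain ⟨l, hl, hp⟩ := Submonoid.exists_list_of_mem_closure h'
  exact ⟨l, fun x hx => by
    rcases hl x hx with h | h
    · exact Or.inl h
    · exact Or.inr (by simpa using h), hp⟩

lemma nonempty {g : G} (h : g ∈ Subgroup.closure S) :
    {n | ∃ l : List G, l.length = n ∧ (∀ x ∈ l, x ∈ S ∨ x⁻¹ ∈ S) ∧ l.prod = g}.Nonempty := by
  obtain ⟨l, h1, h2⟩ := exists_list h
  exact ⟨l.length, l, rfl, h1, h2⟩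

lemma spec {g : G} (h : g ∈ Subgroup.closure S) :
    ∃ l : List G, l.length = wordLength S g ∧ (∀ x ∈ l, x ∈ S ∨ x⁻¹ ∈ S) ∧ l.prod = g :=
  Nat.sInf_mem (nonempty h)

lemma le_of_list {g : G} (l : List G) (hl : ∀ x ∈ l, x ∈ S ∨ x⁻¹ ∈ S) (hp : l.prod = g) :
    wordLength S g ≤ l.length :=
  Nat.sInf_le ⟨l, rfl, hl, hp⟩

lemma one : wordLength S (1 : G) = 0 :=
  Nat.le_zero.mp (le_of_list [] (by simp) (by simp))

lemma eq_one_of_eq_zero {g : G} (h : g ∈ Subgroup.closure S) (h0 : wordLength S g = 0) :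
    g = 1 := by
  obtain ⟨l, hlen, _, hp⟩ := spec h
  rw [h0, List.length_eq_zero_iff] at hlen
  simp [hlen] at hp
  exact hp.symm

lemma mul_le {g h : G} (hg : g ∈ Subgroup.closure S) (hh : h ∈ Subgroup.closure S) :
    wordLength S (g * h) ≤ wordLength S g + wordLength S h := by
  obtain ⟨l1, h1, h2, h3⟩ := spec hg
  obtain ⟨l2, k1, k2, k3⟩ := spec hh
  have := le_of_list (l1 ++ l2) (fun x hx => by
    rcases List.mem_append.mp hx with hx | hx
    exacts [h2 x hx, k2 x hx]) (by rw [List.prod_append, h3, k3])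
  simpa [h1, k1] using this

lemma inv_le {g : G} (hg : g ∈ Subgroup.closure S) :
    wordLength S g⁻¹ ≤ wordLength S g := by
  obtain ⟨l, h1, h2, h3⟩ := spec hg
  have hp : (l.reverse.map (·⁻¹)).prod = g⁻¹ := by
    rw [← h3, List.prod_inv_reverse, ← List.map_reverse]
  have := le_of_list (l.reverse.map (·⁻¹)) (fun x hx => by
    simp only [List.mem_map, List.mem_reverse] at hx
    obtain ⟨y, hy, rfl⟩ := hx
    rcases h2 y hy with h | h
    · exact Or.inr (by simpa using h)
    · exact Or.inl h) hp
  simpa [h1] using this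

lemma inv {g : G} (hg : g ∈ Subgroup.closure S) :
    wordLength S g⁻¹ = wordLength S g :=
  le_antisymm (inv_le hg) (by simpa using inv_le (Subgroup.inv_mem _ hg))

lemma pow_le {g : G} (hg : g ∈ Subgroup.closure S) (k : ℕ) :
    wordLength S (g ^ k) ≤ k * wordLength S g := by
  induction k with
  | zero => simp [one]
  | succ k ih =>
    rw [pow_succ]
    calc wordLength S (g ^ k * g) ≤ wordLength S (g ^ k) + wordLength S g :=
          mul_le (Subgroup.pow_mem _ hg k) hg
      _ ≤ k * wordLength S g + wordLength S g := by omega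
      _ = (k + 1) * wordLength S g := by ring

lemma zpow_le {g : G} (hg : g ∈ Subgroup.closure S) (z : ℤ) :
    wordLength S (g ^ z) ≤ z.natAbs * wordLength S g := by
  rcases Int.natAbs_eq z with h | h
  · rw [h, zpow_natCast]; exact pow_le hg _
  · rw [h]
    simp only [zpow_neg, zpow_natCast, Int.natAbs_neg, Int.natAbs_natCast]
    calc wordLength S ((g ^ z.natAbs)⁻¹) = wordLength S (g ^ z.natAbs) :=
          inv (Subgroup.pow_mem _ hg _)
      _ ≤ z.natAbs * wordLength S g := pow_le hg _

end WL

lemma memcl {G : Type*} [Group G] {S : Set G} (hgen : Subgroup.closure S = ⊤) (g : G) :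
    g ∈ Subgroup.closure S := by rw [hgen]; trivial

section Tau

open Filter

variable {G : Type*} [Group G] {S : Set G} (hgen : Subgroup.closure S = ⊤)
  {τ : G → ℝ} (hτ : ∀ g : G, Filter.Tendsto (fun n : ℕ => (wordLength S (g ^ n) : ℝ) / n)
      Filter.atTop (nhds (τ g)))

include hgen hτ

lemma tau_le (g : G) : τ g ≤ (wordLength S g : ℝ) := by
  refine le_of_tendsto (hτ g) ?_
  filter_upwards [eventually_ge_atTop 1] with n hn
  have h' : (wordLength S (g ^ n) : ℝ) ≤ n * wordLength S g := by
    exact_mod_cast WL.pow_le (memcl hgen g) n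
  rw [div_le_iff₀ (by positivity)]
  linarith

omit hgen in
lemma tau_one : τ (1 : G) = 0 := by
  refine tendsto_nhds_unique (hτ 1) ?_
  have : (fun n : ℕ => (wordLength S ((1:G) ^ n) : ℝ) / n) = fun _ => 0 := by
    funext n; simp [WL.one]
  rw [this]; exact tendsto_const_nhds

lemma tau_inv (g : G) : τ g⁻¹ = τ g := by
  refine tendsto_nhds_unique (hτ g⁻¹) ?_
  have : (fun n : ℕ => (wordLength S ((g⁻¹) ^ n) : ℝ) / n)
      = fun n : ℕ => (wordLength S (g ^ n) : ℝ) / n := by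
    funext n; rw [inv_pow, WL.inv (memcl hgen _)]
  rw [this]; exact hτ g

omit hgen in
lemma tau_pow (g : G) (k : ℕ) : τ (g ^ k) = k * τ g := by
  rcases Nat.eq_zero_or_pos k with rfl | hk
  · simpa using tau_one hτ
  refine tendsto_nhds_unique (hτ (g ^ k)) ?_
  have h1 : Tendsto (fun n : ℕ => k * n) atTop atTop :=
    tendsto_atTop_mono (fun n => Nat.le_mul_of_pos_left n hk) tendsto_id
  have h2 : Tendsto (fun n : ℕ => (wordLength S (g ^ (k * n)) : ℝ) / ((k : ℝ) * n)) atTop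
      (nhds (τ g)) := by
    refine ((hτ g).comp h1).congr fun n => ?_
    simp [Function.comp, Nat.cast_mul]
  have h3 := h2.const_mul (k : ℝ)
  refine h3.congr' ?_
  filter_upwards [eventually_ge_atTop 1] with n hn
  rw [pow_mul]
  have hk0 : (k : ℝ) ≠ 0 := Nat.cast_ne_zero.mpr hk.ne'
  have hn0 : (n : ℝ) ≠ 0 := Nat.cast_ne_zero.mpr (by omega)
  field_simp

lemma tau_zpow (g : G) (z : ℤ) : τ (g ^ z) = (z.natAbs : ℝ) * τ g := by
  rcases Int.natAbs_eq z with h | h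
  · conv_lhs => rw [h]
    rw [zpow_natCast, tau_pow hτ]
  · conv_lhs => rw [h]
    rw [zpow_neg, zpow_natCast, tau_inv hgen hτ, tau_pow hτ]

lemma tau_mul_le {g h : G} (hcom : Commute g h) : τ (g * h) ≤ τ g + τ h := by
  refine le_of_tendsto_of_tendsto' (hτ (g * h)) ((hτ g).add (hτ h)) fun n => ?_
  rw [hcom.mul_pow, ← add_div]
  rcases Nat.eq_zero_or_pos n with rfl | hn
  · simp
  have h1 : (wordLength S (g ^ n * h ^ n) : ℝ)
      ≤ (wordLength S (g ^ n) : ℝ) + wordLength S (h ^ n) := by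
    exact_mod_cast WL.mul_le (Subgroup.pow_mem _ (memcl hgen g) n)
      (Subgroup.pow_mem _ (memcl hgen h) n)
  have hn0 : (0:ℝ) < n := by exact_mod_cast hn
  exact (div_le_div_iff_of_pos_right hn0).mpr h1

lemma tau_mul_bounded {g h : G} (hcom : Commute g h) (M : ℝ)
    (hM : ∀ n : ℕ, (wordLength S (h ^ n) : ℝ) ≤ M) : τ (g * h) = τ g := by
  have key : ∀ n : ℕ, |(wordLength S ((g * h) ^ n) : ℝ) - wordLength S (g ^ n)| ≤ M := by
    intro n
    rw [abs_sub_le_iff]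
    constructor
    · have h1 : wordLength S ((g*h)^n) ≤ wordLength S (g^n) + wordLength S (h^n) := by
        rw [hcom.mul_pow]
        exact WL.mul_le (Subgroup.pow_mem _ (memcl hgen g) n) (Subgroup.pow_mem _ (memcl hgen h) n)
      have h2 := hM n
      have h1' : (wordLength S ((g*h)^n) : ℝ)
          ≤ (wordLength S (g^n) : ℝ) + wordLength S (h^n) := by exact_mod_cast h1
      linarith
    · have hgn : g ^ n = (g*h)^n * (h^n)⁻¹ := by rw [hcom.mul_pow]; group
      have h1 : wordLength S (g^n) ≤ wordLength S ((g*h)^n) + wordLength S ((h^n)⁻¹) := by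
        rw [hgn]
        exact WL.mul_le (Subgroup.pow_mem _ (memcl hgen (g*h)) n)
          (Subgroup.inv_mem _ (Subgroup.pow_mem _ (memcl hgen h) n))
      rw [WL.inv (Subgroup.pow_mem _ (memcl hgen h) n)] at h1
      have h1' : (wordLength S (g^n) : ℝ)
          ≤ (wordLength S ((g*h)^n) : ℝ) + wordLength S (h^n) := by exact_mod_cast h1
      have h2 := hM n
      linarith
  have t1 : Tendsto (fun n : ℕ => (wordLength S ((g*h)^n) : ℝ)/n - (wordLength S (g^n) : ℝ)/n)
      atTop (nhds (τ (g*h) - τ g)) := (hτ (g*h)).sub (hτ g)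
  have t2 : Tendsto (fun n : ℕ => (wordLength S ((g*h)^n) : ℝ)/n - (wordLength S (g^n) : ℝ)/n)
      atTop (nhds 0) := by
    refine squeeze_zero_norm (fun n => ?_) (tendsto_const_div_atTop_nhds_zero_nat M)
    rw [div_sub_div_same, Real.norm_eq_abs, abs_div, Nat.abs_cast]
    rcases Nat.eq_zero_or_pos n with rfl | hn
    · simp
    have hn0 : (0:ℝ) < n := by exact_mod_cast hn
    exact (div_le_div_iff_of_pos_right hn0).mpr (key n)
  have := tendsto_nhds_unique t1 t2
  linarith

end Tau

open Filter


section QLB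

variable {n : ℕ}

/-- integer cast of a vector -/
def castR (w : Fin n → ℤ) : Fin n → ℝ := fun i => (w i : ℝ)

/-- ℓ¹ "norm" of a real vector -/
noncomputable def N1 (x : Fin n → ℝ) : ℝ := ∑ i, |x i|

/-- coordinatewise rounding -/
noncomputable def rnd (x : Fin n → ℝ) : Fin n → ℤ := fun i => round (x i)

lemma N1_nonneg (x : Fin n → ℝ) : 0 ≤ N1 x := Finset.sum_nonneg fun i _ => abs_nonneg _

lemma N1_continuous : Continuous (N1 (n := n)) := by
  apply continuous_finset_sum
  exact fun i _ => (continuous_apply i).abs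

lemma N1_castR (w : Fin n → ℤ) : N1 (castR w) = ∑ i, (|w i| : ℝ) := by
  unfold N1 castR
  push_cast
  rfl

lemma abs_rnd_sub (x : Fin n → ℝ) (i : Fin n) : |(rnd x i : ℝ) - x i| ≤ 1 / 2 := by
  rw [abs_sub_comm]; exact abs_sub_round (x i)

theorem q_lower_bound (hn : 0 < n) (q : (Fin n → ℤ) → ℝ) (L c : ℝ) (hL : 0 ≤ L) (hc : 0 < c)
    (hq0 : ∀ w, 0 ≤ q w)
    (hadd : ∀ v w, q (v + w) ≤ q v + q w)
    (hsmul : ∀ (k : ℤ) (w), q (k • w) = (k.natAbs : ℝ) * q w)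
    (hle : ∀ w, q w ≤ L * ∑ i, (|w i| : ℝ))
    (hgec : ∀ w, w ≠ 0 → c ≤ q w) :
    ∃ δ > 0, ∀ w : Fin n → ℤ, δ * (∑ i, (|w i| : ℝ)) ≤ q w := by
  -- basic facts about q
  have hq_diff : ∀ v w, q v ≤ q w + q (v - w) := by
    intro v w
    have := hadd w (v - w)
    simpa using this
  have hleN : ∀ w, q w ≤ L * N1 (castR w) := by
    intro w; rw [N1_castR]; exact hle w
  have hN1cast_le : ∀ (w : Fin n → ℤ) (x : Fin n → ℝ), (∀ i, |(w i : ℝ) - x i| ≤ 1) →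
      N1 (castR w) ≤ N1 x + n := by
    intro w x hwx
    unfold N1 castR
    calc (∑ i, |(w i : ℝ)|) ≤ ∑ i, (|x i| + 1) := by
          apply Finset.sum_le_sum
          intro i _
          have := hwx i
          have := abs_abs_sub_abs_le_abs_sub ((w i : ℝ)) (x i)
          have h2 := abs_sub_abs_le_abs_sub ((w i : ℝ)) (x i)
          nlinarith [abs_nonneg ((w i : ℝ) - x i)]
      _ = N1 x + n := by rw [Finset.sum_add_distrib]; simp [N1]
  set B : ℝ := 2 * L * n with hB
  have hB0 : 0 ≤ B := by positivity
  -- the three-term rounding estimate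
  have key_round : ∀ x y : Fin n → ℝ, q (rnd (x + y)) ≤ q (rnd x) + q (rnd y) + B := by
    intro x y
    have h1 : q (rnd (x + y)) ≤ q (rnd x + rnd y) + q (rnd (x + y) - rnd x - rnd y) := by
      have := hq_diff (rnd (x + y)) (rnd x + rnd y)
      have e : rnd (x + y) - (rnd x + rnd y) = rnd (x + y) - rnd x - rnd y := by ring
      rwa [e] at this
    have h2 : q (rnd x + rnd y) ≤ q (rnd x) + q (rnd y) := hadd _ _
    have h3 : q (rnd (x + y) - rnd x - rnd y) ≤ B := by
      have hb : ∀ i : Fin n, (|(rnd (x + y) - rnd x - rnd y) i| : ℝ) ≤ 2 := by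
        intro i
        have e1 := abs_rnd_sub (x + y) i
        have e2 := abs_rnd_sub x i
        have e3 := abs_rnd_sub y i
        have : ((rnd (x+y) - rnd x - rnd y) i : ℝ) =
            ((rnd (x+y) i : ℝ) - (x+y) i) - ((rnd x i : ℝ) - x i) - ((rnd y i : ℝ) - y i) := by
          simp [Pi.add_apply]
          push_cast
          ring
        rw [this]
        have k1 := abs_sub (((rnd (x+y) i : ℝ) - (x+y) i) - ((rnd x i : ℝ) - x i)) ((rnd y i : ℝ) - y i)
        have k2 := abs_sub (((rnd (x+y) i : ℝ) - (x+y) i)) (((rnd x i : ℝ) - x i))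
        linarith
      calc q (rnd (x + y) - rnd x - rnd y) ≤ L * ∑ i, (|(rnd (x + y) - rnd x - rnd y) i| : ℝ) :=
            hle _
        _ ≤ L * ∑ _i : Fin n, (2:ℝ) := by
            apply mul_le_mul_of_nonneg_left _ hL
            apply Finset.sum_le_sum
            intro i _
            exact_mod_cast hb i
        _ = B := by simp [hB]; ring
    linarith
  -- the subadditive sequences
  set u : (Fin n → ℝ) → ℕ → ℝ := fun x m => q (rnd ((m : ℝ) • x)) + B with hu
  have hsub : ∀ x, Subadditive (u x) := by
    intro x m k
    have e : ((m + k : ℕ) : ℝ) • x = (m : ℝ) • x + (k : ℝ) • x := by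
      push_cast
      rw [add_smul]
    have := key_round ((m : ℝ) • x) ((k : ℝ) • x)
    simp only [hu]
    rw [e]
    linarith
  have hbdd : ∀ x, BddBelow (Set.range fun m : ℕ => u x m / m) := by
    intro x
    refine ⟨0, fun r hr => ?_⟩
    obtain ⟨m, rfl⟩ := hr
    have : 0 ≤ u x m := by
      have := hq0 (rnd ((m : ℝ) • x)); simp only [hu]; linarith
    positivity
  set P : (Fin n → ℝ) → ℝ := fun x => (hsub x).lim with hP
  have hPlim : ∀ x, Tendsto (fun m : ℕ => u x m / m) atTop (nhds (P x)) := fun x =>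
    (hsub x).tendsto_lim (hbdd x)
  -- nonnegativity
  have hP0 : ∀ x, 0 ≤ P x := by
    intro x
    refine ge_of_tendsto (hPlim x) ?_
    filter_upwards with m
    have : 0 ≤ u x m := by
      have := hq0 (rnd ((m : ℝ) • x)); simp only [hu]; linarith
    positivity
  -- upper bound by ℓ¹ norm
  have hPle : ∀ x, P x ≤ L * N1 x := by
    intro x
    have t2 : Tendsto (fun m : ℕ => L * N1 x + (L * n + B) / m) atTop
        (nhds (L * N1 x + 0)) :=
      tendsto_const_nhds.add (tendsto_const_div_atTop_nhds_zero_nat _)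
    rw [add_zero] at t2
    refine le_of_tendsto_of_tendsto' (hPlim x) t2 fun m => ?_
    rcases Nat.eq_zero_or_pos m with rfl | hm
    · simp only [Nat.cast_zero, div_zero]
      have := mul_nonneg hL (N1_nonneg x)
      linarith
    have hm0 : (0:ℝ) < m := by exact_mod_cast hm
    rw [div_le_iff₀ hm0]
    have h1 : q (rnd ((m : ℝ) • x)) ≤ L * N1 (castR (rnd ((m : ℝ) • x))) := hleN _
    have h2 : N1 (castR (rnd ((m : ℝ) • x))) ≤ N1 ((m : ℝ) • x) + n := by
      apply hN1cast_le
      intro i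
      have := abs_rnd_sub ((m : ℝ) • x) i
      show |((rnd ((m:ℝ) • x)) i : ℝ) - ((m:ℝ) • x) i| ≤ 1
      linarith
    have h3 : N1 ((m : ℝ) • x) = m * N1 x := by
      unfold N1
      rw [Finset.mul_sum]
      congr 1
      funext i
      rw [Pi.smul_apply, smul_eq_mul, abs_mul, abs_of_nonneg (by positivity : (0:ℝ) ≤ (m:ℝ))]
    have hrhs : (L * N1 x + (L * ↑n + B)/↑m) * ↑m = L * N1 x * m + (L * ↑n + B) := by
      field_simp
    rw [hrhs]
    have h4 : q (rnd ((m : ℝ) • x)) ≤ L * ((m : ℝ) * N1 x + n) := by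
      calc q (rnd ((m : ℝ) • x)) ≤ L * N1 (castR (rnd ((m : ℝ) • x))) := h1
        _ ≤ L * (N1 ((m : ℝ) • x) + n) := mul_le_mul_of_nonneg_left h2 hL
        _ = L * ((m : ℝ) * N1 x + n) := by rw [h3]
    simp only [hu]
    nlinarith
  -- subadditivity of P
  have hPadd : ∀ x y, P (x + y) ≤ P x + P y := by
    intro x y
    refine le_of_tendsto_of_tendsto' (hPlim (x + y)) ((hPlim x).add (hPlim y)) fun m => ?_
    rw [← add_div]
    rcases Nat.eq_zero_or_pos m with rfl | hm
    · simp
    have hm0 : (0:ℝ) < m := by exact_mod_cast hm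
    rw [div_le_div_iff_of_pos_right hm0]
    have e : (m : ℝ) • (x + y) = (m : ℝ) • x + (m : ℝ) • y := smul_add _ _ _
    have := key_round ((m : ℝ) • x) ((m : ℝ) • y)
    simp only [hu]
    rw [e]
    linarith
  have hPdiff : ∀ x y, P x ≤ P y + P (x - y) := by
    intro x y
    have := hPadd y (x - y)
    simpa using this
  -- value on integer vectors
  have hPint : ∀ w : Fin n → ℤ, P (castR w) = q w := by
    intro w
    have e : ∀ m : ℕ, rnd ((m : ℝ) • castR w) = (m : ℤ) • w := by
      intro m
      funext i
      show round ((m : ℝ) * (w i : ℝ)) = (m : ℤ) * w i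
      rw [show ((m : ℝ) * (w i : ℝ)) = (((m : ℤ) * w i : ℤ) : ℝ) by push_cast; ring]
      exact round_intCast _
    have t2 : Tendsto (fun m : ℕ => u (castR w) m / m) atTop (nhds (q w)) := by
      have t3 : Tendsto (fun m : ℕ => q w + B / m) atTop (nhds (q w + 0)) :=
        tendsto_const_nhds.add (tendsto_const_div_atTop_nhds_zero_nat _)
      rw [add_zero] at t3
      refine t3.congr' ?_
      filter_upwards [eventually_ge_atTop 1] with m hm
      have hm0 : (m : ℝ) ≠ 0 := by positivity
      simp only [hu]
      rw [e m, hsmul]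
      simp only [Int.natAbs_natCast]
      field_simp
    exact tendsto_nhds_unique (hPlim (castR w)) t2
  -- ℕ-homogeneity of P
  have hPnsmul : ∀ (k : ℕ), 1 ≤ k → ∀ x, P ((k : ℝ) • x) = k * P x := by
    intro k hk x
    have e : ∀ m : ℕ, ((m : ℝ)) • ((k : ℝ) • x) = ((k * m : ℕ) : ℝ) • x := by
      intro m
      rw [smul_smul]
      push_cast
      ring_nf
    have h1 : Tendsto (fun m : ℕ => k * m) atTop atTop :=
      tendsto_atTop_mono (fun m => Nat.le_mul_of_pos_left m hk) tendsto_id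
    have h2 : Tendsto (fun m : ℕ => u x (k * m) / ((k : ℝ) * m)) atTop (nhds (P x)) := by
      refine ((hPlim x).comp h1).congr fun m => ?_
      simp [Function.comp, Nat.cast_mul]
    have h3 := h2.const_mul (k : ℝ)
    refine tendsto_nhds_unique (hPlim ((k : ℝ) • x)) (h3.congr' ?_)
    filter_upwards [eventually_ge_atTop 1] with m hm
    have hk0 : (k : ℝ) ≠ 0 := Nat.cast_ne_zero.mpr (by omega)
    have hm0 : (m : ℝ) ≠ 0 := Nat.cast_ne_zero.mpr (by omega)
    simp only [hu]
    rw [e m]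
    field_simp
  -- positivity of P on nonzero vectors
  have hPpos : ∀ x : Fin n → ℝ, x ≠ 0 → 0 < P x := by
    intro x hx
    rcases (hP0 x).lt_or_eq with h | h
    · exact h
    exfalso
    obtain ⟨i₀, hi₀⟩ : ∃ i, x i ≠ 0 := by
      by_contra hcon; push_neg at hcon; exact hx (funext hcon)
    set a := |x i₀| with ha
    have ha0 : 0 < a := abs_pos.mpr hi₀
    obtain ⟨M, hM⟩ := exists_nat_gt (max (L * n / c) (1 / a))
    have hMa : 1 / a < (M : ℝ) := lt_of_le_of_lt (le_max_right _ _) hM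
    have hMc : L * n / c < (M : ℝ) := lt_of_le_of_lt (le_max_left _ _) hM
    have hM0 : (0:ℝ) < M := lt_trans (by positivity) hMa
    have hM1 : 1 ≤ M := by exact_mod_cast Nat.one_le_iff_ne_zero.mpr (by
      intro h0; rw [h0] at hM0; simp at hM0)
    -- pigeonhole map
    have hfmem : ∀ (k : ℕ) (i : Fin n), (⌊Int.fract ((k : ℝ) * x i) * M⌋).toNat < M := by
      intro k i
      have h1 : (0:ℝ) ≤ Int.fract ((k : ℝ) * x i) := Int.fract_nonneg _
      have h2 : Int.fract ((k : ℝ) * x i) < 1 := Int.fract_lt_one _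
      have h3 : Int.fract ((k : ℝ) * x i) * M < M := by nlinarith
      have h4 : ⌊Int.fract ((k : ℝ) * x i) * M⌋ < (M : ℤ) := by
        apply Int.floor_lt.mpr; exact_mod_cast h3
      omega
    set f : Fin (M ^ n + 1) → (Fin n → Fin M) := fun k i =>
      ⟨(⌊Int.fract ((k : ℝ) * x i) * M⌋).toNat, hfmem k i⟩ with hf
    have hcard : Fintype.card (Fin n → Fin M) < Fintype.card (Fin (M ^ n + 1)) := by
      simp [Fintype.card_fun]
    obtain ⟨k₁, k₂, hkne, hfeq⟩ := Fintype.exists_ne_map_eq_of_card_lt f hcard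
    -- wlog k₁ < k₂
    have main : ∀ k₁ k₂ : Fin (M ^ n + 1), (k₁ : ℕ) < (k₂ : ℕ) → f k₁ = f k₂ → False := by
      intro k₁ k₂ hlt hfe
      set m : ℕ := (k₂ : ℕ) - (k₁ : ℕ) with hm
      have hm1 : 1 ≤ m := by omega
      set p : Fin n → ℤ := fun i => ⌊((k₂ : ℕ) : ℝ) * x i⌋ - ⌊((k₁ : ℕ) : ℝ) * x i⌋ with hp'
      have herr : ∀ i, |(p i : ℝ) - (m : ℝ) * x i| < 1 / M := by
        intro i
        have hfl : ⌊Int.fract (((k₁ : ℕ) : ℝ) * x i) * M⌋ = ⌊Int.fract (((k₂ : ℕ) : ℝ) * x i) * M⌋ := by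
          have := congrFun hfe i
          simp only [hf] at this
          have h2 := congrArg Fin.val this
          simp only at h2
          have n1 : (0:ℤ) ≤ ⌊Int.fract (((k₁ : ℕ) : ℝ) * x i) * M⌋ :=
            Int.floor_nonneg.mpr (mul_nonneg (Int.fract_nonneg _) (Nat.cast_nonneg M))
          have n2 : (0:ℤ) ≤ ⌊Int.fract (((k₂ : ℕ) : ℝ) * x i) * M⌋ :=
            Int.floor_nonneg.mpr (mul_nonneg (Int.fract_nonneg _) (Nat.cast_nonneg M))
          omega
        have hfr : |Int.fract (((k₁ : ℕ) : ℝ) * x i) * M - Int.fract (((k₂ : ℕ) : ℝ) * x i) * M| < 1 :=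
          Int.abs_sub_lt_one_of_floor_eq_floor hfl
        have hfr2 : |Int.fract (((k₁ : ℕ) : ℝ) * x i) - Int.fract (((k₂ : ℕ) : ℝ) * x i)| < 1 / M := by
          rw [lt_div_iff₀ hM0]
          have e : |Int.fract (((k₁ : ℕ) : ℝ) * x i) - Int.fract (((k₂ : ℕ) : ℝ) * x i)| * M
              = |Int.fract (((k₁ : ℕ) : ℝ) * x i) * M - Int.fract (((k₂ : ℕ) : ℝ) * x i) * M| := by
            rw [← sub_mul, abs_mul, abs_of_nonneg (le_of_lt hM0)]
          rw [e]
          exact hfr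
        have e1 : (p i : ℝ) - (m : ℝ) * x i
            = (Int.fract (((k₁ : ℕ) : ℝ) * x i) - Int.fract (((k₂ : ℕ) : ℝ) * x i)) := by
          have f1 : Int.fract (((k₁ : ℕ) : ℝ) * x i) = ((k₁ : ℕ) : ℝ) * x i - ⌊((k₁ : ℕ) : ℝ) * x i⌋ :=
            (Int.self_sub_floor _).symm
          have f2 : Int.fract (((k₂ : ℕ) : ℝ) * x i) = ((k₂ : ℕ) : ℝ) * x i - ⌊((k₂ : ℕ) : ℝ) * x i⌋ :=
            (Int.self_sub_floor _).symm
          have hmc : (m : ℝ) = ((k₂ : ℕ) : ℝ) - ((k₁ : ℕ) : ℝ) := by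
            rw [hm]; push_cast [Nat.cast_sub hlt.le]; ring
          rw [f1, f2, hmc, hp']
          push_cast
          ring
        rw [e1]
        exact hfr2
      -- p is nonzero
      have hpne : p ≠ 0 := by
        intro h0
        have := herr i₀
        rw [h0] at this
        simp only [Pi.zero_apply, Int.cast_zero, zero_sub, abs_neg] at this
        have hma : a ≤ |(m : ℝ) * x i₀| := by
          rw [abs_mul, abs_of_nonneg (by positivity : (0:ℝ) ≤ (m:ℝ))]
          have : (1:ℝ) ≤ (m:ℝ) := by exact_mod_cast hm1
          nlinarith
        have h1a : 1 / (M:ℝ) < a := by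
          rw [div_lt_iff₀ hM0]
          rw [div_lt_iff₀ ha0] at hMa
          nlinarith
        linarith
      -- contradiction via the chain of inequalities
      have hc1 : c ≤ q p := hgec p hpne
      have hc2 : q p = P (castR p) := (hPint p).symm
      have hc3 : P (castR p) ≤ P ((m : ℝ) • x) + P (castR p - (m : ℝ) • x) := hPdiff _ _
      have hc4 : P ((m : ℝ) • x) = m * P x := hPnsmul m hm1 x
      have hc5 : P (castR p - (m : ℝ) • x) ≤ L * N1 (castR p - (m : ℝ) • x) := hPle _
      have hc6 : N1 (castR p - (m : ℝ) • x) ≤ n / M := by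
        unfold N1
        have : ∀ i : Fin n, |(castR p - (m : ℝ) • x) i| ≤ 1 / M := by
          intro i
          have := herr i
          show |(p i : ℝ) - (m : ℝ) * x i| ≤ 1 / M
          linarith
        calc (∑ i, |(castR p - (m : ℝ) • x) i|) ≤ ∑ _i : Fin n, 1 / (M:ℝ) :=
              Finset.sum_le_sum fun i _ => this i
          _ = n / M := by simp; ring
      have hc7 : L * (n / M) < c := by
        have h1 : L * n < c * M := by
          rw [div_lt_iff₀ hc] at hMc; linarith
        rw [← mul_div_assoc, div_lt_iff₀ hM0]
        linarith
      have hLn : L * N1 (castR p - (m : ℝ) • x) ≤ L * (n / M) :=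
        mul_le_mul_of_nonneg_left hc6 hL
      have hc4' : P ((m : ℝ) • x) = 0 := by rw [hc4, ← h, mul_zero]
      linarith
    rcases lt_or_gt_of_ne (fun hv : (k₁ : ℕ) = (k₂ : ℕ) => hkne (Fin.ext hv)) with hlt | hlt
    · exact main k₁ k₂ hlt hfeq
    · exact main k₂ k₁ hlt hfeq.symm
  -- P is Lipschitz, hence continuous
  have hN1dist : ∀ x y : Fin n → ℝ, N1 (x - y) ≤ n * dist x y := by
    intro x y
    unfold N1
    calc (∑ i, |(x - y) i|) ≤ ∑ _i : Fin n, dist x y := by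
          apply Finset.sum_le_sum
          intro i _
          have h1 : ‖(x - y) i‖ ≤ ‖x - y‖ := norm_le_pi_norm (x - y) i
          rw [Real.norm_eq_abs] at h1
          rw [dist_eq_norm]
          exact h1
      _ = n * dist x y := by simp [Finset.sum_const, nsmul_eq_mul]
  have hPcont : Continuous P := by
    apply LipschitzWith.continuous (K := Real.toNNReal (L * n))
    apply LipschitzWith.of_dist_le_mul
    intro x y
    have h1 : P x - P y ≤ L * N1 (x - y) := by
      have := hPdiff x y
      have h2 := hPle (x - y)
      linarith
    have h2 : P y - P x ≤ L * N1 (y - x) := by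
      have := hPdiff y x
      have h2 := hPle (y - x)
      linarith
    have hsym : N1 (y - x) = N1 (x - y) := by
      unfold N1
      congr 1
      funext i
      rw [show (y - x) i = -((x - y) i) by simp, abs_neg]
    have hd1 := hN1dist x y
    have hcoe : (Real.toNNReal (L * n) : ℝ) = max (L * n) 0 := rfl
    rw [Real.dist_eq, hcoe]
    have hdn : 0 ≤ dist x y := dist_nonneg
    rw [abs_sub_le_iff]
    constructor
    · calc P x - P y ≤ L * N1 (x - y) := h1
        _ ≤ L * (n * dist x y) := mul_le_mul_of_nonneg_left hd1 hL
        _ = (L * n) * dist x y := by ring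
        _ ≤ max (L * n) 0 * dist x y := mul_le_mul_of_nonneg_right (le_max_left _ _) hdn
    · calc P y - P x ≤ L * N1 (y - x) := h2
        _ = L * N1 (x - y) := by rw [hsym]
        _ ≤ L * (n * dist x y) := mul_le_mul_of_nonneg_left hd1 hL
        _ = (L * n) * dist x y := by ring
        _ ≤ max (L * n) 0 * dist x y := mul_le_mul_of_nonneg_right (le_max_left _ _) hdn
  -- the ℓ¹ sphere is compact and nonempty
  set K : Set (Fin n → ℝ) := {x | N1 x = 1} with hK
  have hKclosed : IsClosed K := isClosed_eq N1_continuous continuous_const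
  have hKbdd : Bornology.IsBounded K := by
    apply (Metric.isBounded_closedBall (x := (0 : Fin n → ℝ)) (r := 1)).subset
    intro x hx
    rw [Metric.mem_closedBall, dist_zero_right]
    rw [pi_norm_le_iff_of_nonneg zero_le_one]
    intro i
    rw [Real.norm_eq_abs]
    have hmem : x ∈ {x | N1 x = 1} := hx
    have : |x i| ≤ N1 x :=
      Finset.single_le_sum (fun j _ => abs_nonneg (x j)) (Finset.mem_univ i)
    rw [hmem] at this
    exact this
  have hKcompact : IsCompact K := Metric.isCompact_of_isClosed_isBounded hKclosed hKbdd
  have hKne : K.Nonempty := by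
    refine ⟨fun i => if i = ⟨0, hn⟩ then 1 else 0, ?_⟩
    show N1 _ = 1
    unfold N1
    rw [Finset.sum_eq_single ⟨0, hn⟩]
    · simp
    · intro j _ hj; simp [hj]
    · intro hj; exact absurd (Finset.mem_univ _) hj
  obtain ⟨x₀, hx₀K, hmin⟩ := hKcompact.exists_isMinOn hKne hPcont.continuousOn
  have hx₀ne : x₀ ≠ 0 := by
    intro h0
    have : N1 x₀ = 1 := hx₀K
    rw [h0] at this
    simp [N1] at this
  have hδ : 0 < P x₀ := hPpos x₀ hx₀ne
  refine ⟨P x₀, hδ, fun w => ?_⟩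
  by_cases hw : w = 0
  · subst hw
    have hq_zero : q 0 = 0 := by
      have h00 := hsmul 0 0
      simpa using h00
    have hsum0 : (∑ i, (|(0 : Fin n → ℤ) i| : ℝ)) = 0 := by
      simp
    rw [hsum0, hq_zero, mul_zero]
  · set N : ℕ := ∑ i, (w i).natAbs with hN
    have hN1' : 1 ≤ N := by
      rcases Nat.eq_zero_or_pos N with h0 | h1
      · exfalso
        apply hw
        funext i
        have hz : ∀ j ∈ Finset.univ, (w j).natAbs = 0 :=
          (Finset.sum_eq_zero_iff_of_nonneg
            (fun j _ => Nat.zero_le ((w j).natAbs))).mp (hN.symm.trans h0) 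
        show w i = 0
        exact Int.natAbs_eq_zero.mp (hz i (Finset.mem_univ i))
      · exact h1
    have hNpos : (0:ℝ) < N := by exact_mod_cast hN1'
    have hNcast : (N : ℝ) = ∑ i, (|w i| : ℝ) := by
      rw [hN]
      push_cast [Nat.cast_natAbs]
      rfl
    set x := ((N : ℝ))⁻¹ • castR w with hx
    have hcastx : castR w = (N : ℝ) • x := by
      rw [hx, smul_inv_smul₀ (ne_of_gt hNpos)]
    have hxK : x ∈ K := by
      show N1 x = 1
      unfold N1
      rw [hx]
      have : ∀ i, |(((N : ℝ))⁻¹ • castR w) i| = ((N : ℝ))⁻¹ * |castR w i| := by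
        intro i
        rw [Pi.smul_apply, smul_eq_mul, abs_mul, abs_of_nonneg (by positivity)]
      rw [Finset.sum_congr rfl fun i _ => this i, ← Finset.mul_sum]
      have : (∑ i, |castR w i|) = (N : ℝ) := by
        rw [hNcast]
        unfold castR
        push_cast
        rfl
      rw [this]
      field_simp
    have hqP : q w = (N : ℝ) * P x := by
      rw [← hPint w, hcastx, hPnsmul N hN1' x]
    rw [hqP, ← hNcast]
    have : P x₀ ≤ P x := hmin hxK
    nlinarith

end QLB

/-- Let `G` be a finitely generated group with finite generating set `S` and let
`τ(g) = lim_n l_S(gⁿ)/n` be the translation length function. If there is `c > 0` with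
`τ(g) ≥ c` for every infinite order `g ∈ G`, then every finitely generated abelian
subgroup `A` of `G` is undistorted in `G`. -/
theorem stmt_19 {G : Type} [Group G] (S : Set G) (hS : S.Finite)
    (hgen : Subgroup.closure S = ⊤) (τ : G → ℝ) (hτnn : ∀ g : G, 0 ≤ τ g)
    (hτ : ∀ g : G, Filter.Tendsto (fun n : ℕ => (wordLength S (g ^ n) : ℝ) / n)
      Filter.atTop (nhds (τ g)))
    (c : ℝ) (hc : 0 < c) (hcτ : ∀ g : G, ¬ IsOfFinOrder g → c ≤ τ g)
    (A : Subgroup G) (hab : ∀ a b : G, a ∈ A → b ∈ A → a * b = b * a) (hAfg : A.FG) :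
    ∀ T : Set G, T.Finite → T ⊆ (A : Set G) → Subgroup.closure T = A →
      ∃ k : ℝ, 0 < k ∧ ∀ a ∈ A, k * (wordLength T a : ℝ) ≤ (wordLength S a : ℝ) := by
  intro T hTfin hTsub hTgen
  classical
  -- `A` is a finitely generated commutative group
  letI : CommGroup ↥A :=
    { (inferInstance : Group ↥A) with
      mul_comm := fun x y => Subtype.ext (hab x y x.2 y.2) }
  haveI : Group.FG ↥A := (Group.fg_iff_subgroup_fg A).mpr hAfg
  haveI : AddGroup.FG (Additive ↥A) := AddGroup.fg_of_group_fg
  obtain ⟨n, ι, hι, p, hp, ee, ⟨E⟩⟩ :=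
    AddCommGroup.equiv_free_prod_directSum_zmod (Additive ↥A)
  haveI : ∀ i : ι, NeZero (p i ^ ee i) := fun i => ⟨pow_ne_zero _ (hp i).ne_zero⟩
  haveI hDfin : Finite (DirectSum ι (fun i => ZMod (p i ^ ee i))) :=
    Finite.of_equiv (∀ i : ι, ZMod (p i ^ ee i)) DFinsupp.equivFunOnFintype.symm
  set D := DirectSum ι (fun i => ZMod (p i ^ ee i)) with hD
  -- coordinates and section
  let F : (Fin n →₀ ℤ) ≃+ (Fin n → ℤ) := Finsupp.addEquivFunOnFinite
  let vmap : ↥A → (Fin n → ℤ) := fun x => F (E (Additive.ofMul x)).1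
  let sec : (Fin n → ℤ) → ↥A := fun w => Additive.toMul (E.symm (F.symm w, 0))
  have sec_mem : ∀ w, ((sec w : ↥A) : G) ∈ A := fun w => (sec w).2
  have sec_mul : ∀ v w, sec (v + w) = sec v * sec w := by
    intro v w
    show Additive.toMul (E.symm (F.symm (v + w), 0)) = _
    rw [map_add F.symm v w,
      show ((F.symm v + F.symm w, (0 : D)) = (F.symm v, 0) + (F.symm w, 0)) by
        rw [Prod.mk_add_mk, add_zero],
      map_add]
    rfl
  have sec_zpow : ∀ (z : ℤ) (w), sec (z • w) = (sec w) ^ z := by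
    intro z w
    show Additive.toMul (E.symm (F.symm (z • w), 0)) = _
    rw [map_zsmul F.symm,
      show ((z • F.symm w, (0 : D)) = z • (F.symm w, 0)) by
        rw [Prod.smul_mk, smul_zero],
      map_zsmul, toMul_zsmul]
  have vmap_sec : ∀ w, vmap (sec w) = w := by
    intro w
    show F (E (Additive.ofMul (Additive.toMul (E.symm (F.symm w, 0))))).1 = w
    rw [ofMul_toMul, AddEquiv.apply_symm_apply]
    exact F.apply_symm_apply w
  have vmap_mul : ∀ x y : ↥A, vmap (x * y) = vmap x + vmap y := by
    intro x y
    show F (E (Additive.ofMul (x * y))).1 = _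
    have e1 : Additive.ofMul (x * y) = Additive.ofMul x + Additive.ofMul y := rfl
    rw [e1, map_add, Prod.fst_add, map_add]
  have vmap_zpow : ∀ (z : ℤ) (x : ↥A), vmap (x ^ z) = z • vmap x := by
    intro z x
    show F (E (Additive.ofMul (x ^ z))).1 = _
    rw [ofMul_zpow, map_zsmul, Prod.smul_fst, map_zsmul]
  have vmap_one : vmap 1 = 0 := by
    show F (E (Additive.ofMul 1)).1 = 0
    have e1 : Additive.ofMul (1 : ↥A) = 0 := rfl
    rw [e1, map_zero]
    show F (0 : Fin n →₀ ℤ) = 0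
    exact map_zero F
  -- the torsion set
  let tor : D → G := fun d => ((Additive.toMul (E.symm (0, d)) : ↥A) : G)
  have htorfin : (Set.range tor).Finite := Set.finite_range tor
  have hmemtor : ∀ x : ↥A, vmap x = 0 → (x : G) ∈ Set.range tor := by
    intro x hx
    refine ⟨(E (Additive.ofMul x)).2, ?_⟩
    have h1 : (E (Additive.ofMul x)).1 = 0 := by
      have h2 := congrArg F.symm hx
      rw [AddEquiv.symm_apply_apply, map_zero] at h2
      exact h2
    show ((Additive.toMul (E.symm (0, (E (Additive.ofMul x)).2)) : ↥A) : G) = (x : G)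
    rw [← h1, Prod.mk.eta, AddEquiv.symm_apply_apply]
    rfl
  have vmap_tor : ∀ d : D, vmap (Additive.toMul (E.symm (0, d))) = 0 := by
    intro d
    show F (E (Additive.ofMul (Additive.toMul (E.symm (0, d))))).1 = 0
    rw [ofMul_toMul, AddEquiv.apply_symm_apply]
    exact map_zero F
  have htor_zpow : ∀ g ∈ Set.range tor, ∀ m : ℤ, g ^ m ∈ Set.range tor := by
    intro g hg m
    obtain ⟨d, rfl⟩ := hg
    have h1 : tor d ^ m = (((Additive.toMul (E.symm (0, d)) : ↥A) ^ m : ↥A) : G) :=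
      (SubgroupClass.coe_zpow _ _).symm
    rw [h1]
    apply hmemtor
    rw [vmap_zpow, vmap_tor, smul_zero]
  have htor_one : (1 : G) ∈ Set.range tor := by
    refine ⟨0, ?_⟩
    show ((Additive.toMul (E.symm (0, 0)) : ↥A) : G) = (1 : G)
    have e1 : ((0 : Fin n →₀ ℤ), (0 : D)) = (0 : (Fin n →₀ ℤ) × D) := rfl
    rw [e1, map_zero]
    rfl
  have htor_finord : ∀ x : ↥A, vmap x = 0 → IsOfFinOrder ((x : G)) := by
    intro x hx
    haveI : Fintype D := Fintype.ofFinite D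
    refine isOfFinOrder_iff_pow_eq_one.mpr ⟨Fintype.card D, Fintype.card_pos, ?_⟩
    obtain ⟨d, hd⟩ := hmemtor x hx
    have h0 : ((x : G)) ^ Fintype.card D = tor d ^ Fintype.card D := by rw [hd]
    rw [h0]
    show (((Additive.toMul (E.symm (0, d)) : ↥A) : G)) ^ Fintype.card D = 1
    rw [← SubgroupClass.coe_pow]
    have h1 : (Additive.toMul (E.symm (0, d)) : ↥A) ^ Fintype.card D
        = Additive.toMul ((Fintype.card D) • E.symm (0, d)) := by
      rw [toMul_nsmul]
    rw [h1, ← map_nsmul,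
      show ((Fintype.card D) • ((0 : Fin n →₀ ℤ), d) = ((0 : Fin n →₀ ℤ), (0:D))) by
        rw [Prod.smul_mk, smul_zero, card_nsmul_eq_zero],
      show (((0 : Fin n →₀ ℤ), (0:D)) = (0 : (Fin n →₀ ℤ) × D)) from rfl, map_zero]
    rfl
  -- bounds over the finite torsion set
  obtain ⟨MS, hMSmem⟩ := (htorfin.image (fun g => (wordLength S g : ℝ))).bddAbove
  have hMS : ∀ g ∈ Set.range tor, (wordLength S g : ℝ) ≤ MS := fun g hg =>
    hMSmem (Set.mem_image_of_mem _ hg)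
  obtain ⟨MT, hMTmem⟩ := (htorfin.image (fun g => (wordLength T g : ℝ))).bddAbove
  have hMT : ∀ g ∈ Set.range tor, (wordLength T g : ℝ) ≤ MT := fun g hg =>
    hMTmem (Set.mem_image_of_mem _ hg)
  have hMT0 : 0 ≤ MT := le_trans (by positivity) (hMT 1 htor_one)
  -- the function q on ℤ^n
  set q : (Fin n → ℤ) → ℝ := fun w => τ ((sec w : ↥A) : G) with hq
  have hq0 : ∀ w, 0 ≤ q w := fun w => hτnn _
  have hcomm : ∀ v w, Commute ((sec v : ↥A) : G) ((sec w : ↥A) : G) := fun v w =>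
    hab _ _ (sec_mem v) (sec_mem w)
  have hsec_coe_mul : ∀ v w, ((sec (v + w) : ↥A) : G) = ((sec v : ↥A) : G) * ((sec w : ↥A) : G) := by
    intro v w; rw [sec_mul]; rfl
  have hq_add : ∀ v w, q (v + w) ≤ q v + q w := by
    intro v w
    show τ _ ≤ _
    rw [hsec_coe_mul]
    exact tau_mul_le hgen hτ (hcomm v w)
  have hq_smul : ∀ (k : ℤ) (w), q (k • w) = (k.natAbs : ℝ) * q w := by
    intro k w
    show τ _ = _
    rw [show ((sec (k • w) : ↥A) : G) = ((sec w : ↥A) : G) ^ k by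
      rw [sec_zpow]; exact SubgroupClass.coe_zpow _ _]
    exact tau_zpow hgen hτ _ k
  have hq_zero : q 0 = 0 := by
    have h00 := hq_smul 0 0
    simpa using h00
  have hq_gec : ∀ w, w ≠ 0 → c ≤ q w := by
    intro w hw
    apply hcτ
    intro hfin
    apply hw
    obtain ⟨m, hm, hpow⟩ := isOfFinOrder_iff_pow_eq_one.mp hfin
    have h1 : (sec w) ^ m = 1 := by
      apply Subtype.ext
      rw [SubgroupClass.coe_pow]
      exact hpow
    have h2 : (m : ℤ) • w = 0 := by
      have h3 := vmap_zpow (m : ℤ) (sec w)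
      rw [zpow_natCast, h1, vmap_one, vmap_sec] at h3
      exact h3.symm
    funext i
    have h4 := congrFun h2 i
    have h5 : (m : ℤ) * w i = 0 := h4
    have hm0 : (m : ℤ) ≠ 0 := by exact_mod_cast hm.ne'
    exact mul_eq_zero.mp h5 |>.resolve_left hm0
  -- ℓ¹ upper bound for q
  let unit : Fin n → (Fin n → ℤ) := fun i => fun j => if i = j then 1 else 0
  set L : ℝ := ∑ i, q (unit i) with hLdef
  have hL0 : 0 ≤ L := Finset.sum_nonneg fun i _ => hq0 _
  have hsum_le : ∀ (s : Finset (Fin n)) (f : Fin n → (Fin n → ℤ)),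
      q (∑ i ∈ s, f i) ≤ ∑ i ∈ s, q (f i) := by
    intro s f
    induction s using Finset.cons_induction with
    | empty => simp [hq_zero]
    | cons a s ha ih =>
      rw [Finset.sum_cons, Finset.sum_cons]
      calc q (f a + ∑ i ∈ s, f i) ≤ q (f a) + q (∑ i ∈ s, f i) := hq_add _ _
        _ ≤ q (f a) + ∑ i ∈ s, q (f i) := by linarith
  have hq_le : ∀ w, q w ≤ L * ∑ i, (|w i| : ℝ) := by
    intro w
    have hw : w = ∑ i, (w i) • unit i := pi_eq_sum_univ w
    calc q w = q (∑ i, (w i) • unit i) := by rw [← hw]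
      _ ≤ ∑ i, q ((w i) • unit i) := hsum_le _ _
      _ = ∑ i, ((w i).natAbs : ℝ) * q (unit i) := by
          refine Finset.sum_congr rfl fun i _ => ?_
          exact hq_smul (w i) (unit i)
      _ ≤ ∑ i, (|w i| : ℝ) * L := by
          refine Finset.sum_le_sum fun i _ => ?_
          have e1 : ((w i).natAbs : ℝ) = (|w i| : ℝ) := by
            push_cast [Nat.cast_natAbs]
            rfl
          rw [e1]
          refine mul_le_mul_of_nonneg_left ?_ (by positivity)
          exact Finset.single_le_sum (fun j _ => hq0 (unit j)) (Finset.mem_univ i)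
      _ = L * ∑ i, (|w i| : ℝ) := by rw [← Finset.sum_mul, mul_comm]
  -- the lower bound δ
  obtain ⟨δ, hδ0, hδ⟩ : ∃ δ : ℝ, 0 < δ ∧ ∀ w : Fin n → ℤ, δ * (∑ i, (|w i| : ℝ)) ≤ q w := by
    rcases Nat.eq_zero_or_pos n with h0 | hn
    · subst h0
      refine ⟨1, one_pos, fun w => ?_⟩
      have hw0 : w = 0 := Subsingleton.elim _ _
      rw [hw0, hq_zero]
      simp
    · obtain ⟨δ, hδ, hδ'⟩ := q_lower_bound hn q L c hL0 hc hq0 hq_add hq_smul hq_le hq_gec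
      exact ⟨δ, hδ, hδ'⟩
  -- τ equals q via the decomposition x = sec (vmap x) * torsion
  have vmap_inv : ∀ x : ↥A, vmap x⁻¹ = -vmap x := by
    intro x
    have h1 := vmap_zpow (-1) x
    rw [zpow_neg_one] at h1
    rw [h1, neg_one_zsmul]
  have hdec : ∀ x : ↥A, vmap ((sec (vmap x))⁻¹ * x) = 0 := by
    intro x
    rw [vmap_mul, vmap_inv, vmap_sec, neg_add_cancel]
  have htau_eq : ∀ x : ↥A, τ (x : G) = q (vmap x) := by
    intro x
    set t : ↥A := (sec (vmap x))⁻¹ * x with ht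
    have hxt : (x : G) = ((sec (vmap x) : ↥A) : G) * ((t : ↥A) : G) := by
      rw [ht]
      push_cast
      group
    have hbound : ∀ m : ℕ, (wordLength S (((t : ↥A) : G) ^ m) : ℝ) ≤ MS := by
      intro m
      have h1 : ((t : ↥A) : G) ∈ Set.range tor := hmemtor t (hdec x)
      have h2 : ((t : ↥A) : G) ^ m ∈ Set.range tor := by
        have := htor_zpow _ h1 (m : ℤ)
        rwa [zpow_natCast] at this
      exact hMS _ h2
    have hcom : Commute ((sec (vmap x) : ↥A) : G) ((t : ↥A) : G) :=
      hab _ _ (sec_mem _) t.2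
    rw [hxt, tau_mul_bounded hgen hτ hcom MS hbound]
  -- upper bound for T-word length
  have hmemT : ∀ x : ↥A, (x : G) ∈ Subgroup.closure T := fun x => by
    rw [hTgen]; exact x.2
  set qT : (Fin n → ℤ) → ℝ := fun w => (wordLength T ((sec w : ↥A) : G) : ℝ) with hqT
  have hqT0 : ∀ w, 0 ≤ qT w := fun w => by positivity
  have hqT_add : ∀ v w, qT (v + w) ≤ qT v + qT w := by
    intro v w
    show (wordLength T ((sec (v + w) : ↥A) : G) : ℝ)
      ≤ (wordLength T ((sec v : ↥A) : G) : ℝ) + (wordLength T ((sec w : ↥A) : G) : ℝ)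
    rw [hsec_coe_mul]
    exact_mod_cast WL.mul_le (hmemT (sec v)) (hmemT (sec w))
  have hqT_zero : qT 0 = 0 := by
    show (wordLength T _ : ℝ) = 0
    rw [show ((sec 0 : ↥A) : G) = 1 by
      have h1 := sec_zpow 0 0
      rw [zero_smul, zpow_zero] at h1
      rw [h1]; rfl]
    rw [WL.one]
    simp
  have hqT_smul : ∀ (k : ℤ) (w), qT (k • w) ≤ (k.natAbs : ℝ) * qT w := by
    intro k w
    show (wordLength T ((sec (k • w) : ↥A) : G) : ℝ)
      ≤ (k.natAbs : ℝ) * (wordLength T ((sec w : ↥A) : G) : ℝ)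
    rw [show ((sec (k • w) : ↥A) : G) = ((sec w : ↥A) : G) ^ k by
      rw [sec_zpow]; exact SubgroupClass.coe_zpow _ _]
    exact_mod_cast WL.zpow_le (hmemT (sec w)) k
  set LT : ℝ := ∑ i, qT (unit i) with hLT
  have hLT0 : 0 ≤ LT := Finset.sum_nonneg fun i _ => hqT0 _
  have hsumT_le : ∀ (s : Finset (Fin n)) (f : Fin n → (Fin n → ℤ)),
      qT (∑ i ∈ s, f i) ≤ ∑ i ∈ s, qT (f i) := by
    intro s f
    induction s using Finset.cons_induction with
    | empty => simp [hqT_zero]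
    | cons a s ha ih =>
      rw [Finset.sum_cons, Finset.sum_cons]
      calc qT (f a + ∑ i ∈ s, f i) ≤ qT (f a) + qT (∑ i ∈ s, f i) := hqT_add _ _
        _ ≤ qT (f a) + ∑ i ∈ s, qT (f i) := by linarith
  have hqT_le : ∀ w, qT w ≤ LT * ∑ i, (|w i| : ℝ) := by
    intro w
    have hw : w = ∑ i, (w i) • unit i := pi_eq_sum_univ w
    calc qT w = qT (∑ i, (w i) • unit i) := by rw [← hw]
      _ ≤ ∑ i, qT ((w i) • unit i) := hsumT_le _ _
      _ ≤ ∑ i, ((w i).natAbs : ℝ) * qT (unit i) := Finset.sum_le_sum fun i _ => hqT_smul _ _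
      _ ≤ ∑ i, (|w i| : ℝ) * LT := by
          refine Finset.sum_le_sum fun i _ => ?_
          have e1 : ((w i).natAbs : ℝ) = (|w i| : ℝ) := by
            push_cast [Nat.cast_natAbs]
            rfl
          rw [e1]
          refine mul_le_mul_of_nonneg_left ?_ (by positivity)
          exact Finset.single_le_sum (fun j _ => hqT0 (unit j)) (Finset.mem_univ i)
      _ = LT * ∑ i, (|w i| : ℝ) := by rw [← Finset.sum_mul, mul_comm]
  have hwT_full : ∀ x : ↥A,
      (wordLength T (x : G) : ℝ) ≤ LT * (∑ i, (|vmap x i| : ℝ)) + MT := by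
    intro x
    set t : ↥A := (sec (vmap x))⁻¹ * x with ht
    have hxt : (x : G) = ((sec (vmap x) : ↥A) : G) * ((t : ↥A) : G) := by
      rw [ht]; push_cast; group
    have h1 : (wordLength T (x : G) : ℝ)
        ≤ (wordLength T ((sec (vmap x) : ↥A) : G) : ℝ) + wordLength T ((t : ↥A) : G) := by
      rw [hxt]
      exact_mod_cast WL.mul_le (hmemT _) (hmemT _)
    have h2 : (wordLength T ((t : ↥A) : G) : ℝ) ≤ MT := hMT _ (hmemtor t (hdec x))
    have h3 := hqT_le (vmap x)
    show (wordLength T (x : G) : ℝ) ≤ _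
    calc (wordLength T (x : G) : ℝ)
        ≤ (wordLength T ((sec (vmap x) : ↥A) : G) : ℝ) + wordLength T ((t : ↥A) : G) := h1
      _ ≤ LT * (∑ i, (|vmap x i| : ℝ)) + MT := by
          have : (wordLength T ((sec (vmap x) : ↥A) : G) : ℝ) = qT (vmap x) := rfl
          rw [this]
          linarith
  -- conclusion
  refine ⟨min (δ / (LT + MT + 1)) (1 / (MT + 1)), ?_, fun a ha => ?_⟩
  · apply lt_min
    · exact div_pos hδ0 (by linarith)
    · exact div_pos one_pos (by linarith)
  set x : ↥A := ⟨a, ha⟩ with hx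
  have hAx : (x : G) = a := rfl
  set w : Fin n → ℤ := vmap x with hwdef
  have hS_ge : δ * (∑ i, (|w i| : ℝ)) ≤ (wordLength S a : ℝ) := by
    calc δ * (∑ i, (|w i| : ℝ)) ≤ q w := hδ w
      _ = τ a := by rw [← htau_eq x]
      _ ≤ (wordLength S a : ℝ) := tau_le hgen hτ a
  have hT_le := hwT_full x
  rw [hAx] at hT_le
  by_cases hw0 : w = 0
  · by_cases ha1 : a = 1
    · subst ha1
      rw [WL.one]
      simp
    · have h1 : (1:ℝ) ≤ (wordLength S a : ℝ) := by
        have hne : wordLength S a ≠ 0 := fun h0 => ha1 (WL.eq_one_of_eq_zero (memcl hgen a) h0)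
        exact_mod_cast Nat.one_le_iff_ne_zero.mpr hne
      have h2 : (wordLength T a : ℝ) ≤ MT := by
        have := hMT _ (hmemtor x hw0)
        rwa [hAx] at this
      have h3 : (0:ℝ) ≤ (wordLength T a : ℝ) := by positivity
      calc min (δ / (LT + MT + 1)) (1 / (MT + 1)) * (wordLength T a : ℝ)
          ≤ (1 / (MT + 1)) * (wordLength T a : ℝ) :=
            mul_le_mul_of_nonneg_right (min_le_right _ _) h3
        _ ≤ (1 / (MT + 1)) * (MT + 1) := by
            apply mul_le_mul_of_nonneg_left _ (by positivity)
            linarith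
        _ = 1 := by
            rw [one_div, inv_mul_cancel₀ (by linarith : MT + 1 ≠ 0)]
        _ ≤ (wordLength S a : ℝ) := h1
  · have hN1 : (1:ℝ) ≤ ∑ i, (|w i| : ℝ) := by
      obtain ⟨i, hi⟩ : ∃ i, w i ≠ 0 := by
        by_contra hcon
        push_neg at hcon
        exact hw0 (funext hcon)
      have h1 : (1:ℝ) ≤ (|w i| : ℝ) := by
        have : 1 ≤ |w i| := Int.one_le_abs (by omega)
        exact_mod_cast this
      calc (1:ℝ) ≤ (|w i| : ℝ) := h1
        _ ≤ ∑ j, (|w j| : ℝ) :=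
            Finset.single_le_sum (f := fun j => (|w j| : ℝ)) (fun j _ => by positivity)
              (Finset.mem_univ i)
    have hT_le2 : (wordLength T a : ℝ) ≤ (LT + MT + 1) * (∑ i, (|w i| : ℝ)) := by
      have h7 : (LT + MT + 1) * (∑ i, (|w i| : ℝ))
          = LT * (∑ i, (|w i| : ℝ)) + MT * (∑ i, (|w i| : ℝ)) + (∑ i, (|w i| : ℝ)) := by
        ring
      rw [h7]
      have h5 := mul_le_mul_of_nonneg_left hN1 hMT0
      rw [mul_one] at h5
      linarith
    have hTnn : (0:ℝ) ≤ (wordLength T a : ℝ) := Nat.cast_nonneg _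
    have hC0 : (0:ℝ) < LT + MT + 1 := by linarith
    have hk1 : (0:ℝ) ≤ δ / (LT + MT + 1) := le_of_lt (div_pos hδ0 hC0)
    calc min (δ / (LT + MT + 1)) (1 / (MT + 1)) * (wordLength T a : ℝ)
        ≤ (δ / (LT + MT + 1)) * (wordLength T a : ℝ) :=
          mul_le_mul_of_nonneg_right (min_le_left _ _) hTnn
      _ ≤ (δ / (LT + MT + 1)) * ((LT + MT + 1) * (∑ i, (|w i| : ℝ))) :=
          mul_le_mul_of_nonneg_left hT_le2 hk1
      _ = δ * (∑ i, (|w i| : ℝ)) := by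
          rw [← mul_assoc, div_mul_cancel₀ δ (ne_of_gt hC0)]
      _ ≤ (wordLength S a : ℝ) := hS_ge
end
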